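/- arXiv:math/0201306 — 4 statements merged into one kernel-verified Lean document; each statement's English description precedes it below -/
import Mathlib

section
/- Define the homological width hw of a bounded bigraded cohomology theory H^{i,j} (with finitely many nonzero groups, not all zero) as the minimal number of adjacent diagonals 2i + j = const supporting all nonzero groups. If H is the cohomology of a direct sum of shifted copies C_{n_k}[i_k]{j_k} of the complexes C_n over A = ℚ[X]/(X²) (with at least one summand), then hw(H) ≥ 2. -/
noncomputable section

open Classical

/-- The base ring `A = ℚ[X]/(X²)`, realized as dual numbers over `ℚ`. -/
abbrev A : Type := DualNumber ℚ

/-- The class of `X` in `A = ℚ[X]/(X²)`. -/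
def Aeps : A := DualNumber.eps

/-- Data of a bounded cochain complex of finitely generated free graded `A`-modules:
in homological degree `i` the module is free on the finite set `B i`, the generator
`b` having internal-grading label `deg i b` (the generator spans a copy of `A{deg i b}`,
whose two homogeneous components sit in internal degrees `deg i b - 1` and
`deg i b + 1`).  The differential is given by the matrices `d i`, whose entry at
`(b, b')` is an element of `A`. `N` is a bound for the support. -/
structure PC where
  N : ℕ
  B : ℤ → Type
  fin : ∀ i, Fintype (B i)
  deg : ∀ i, B i → ℤ
  d : ∀ i, B (i + 1) → B i → A

attribute [instance] PC.fin

namespace PC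

/-- The differential, as a map on coordinate vectors. -/
def D (C : PC) (i : ℤ) (v : C.B i → A) : C.B (i + 1) → A :=
  fun b => ∑ b', C.d i b b' * v b'

/-- The differential arriving in degree `i`. -/
def Dto (C : PC) (i : ℤ) (u : C.B (i - 1) → A) : C.B i → A :=
  fun b => C.D (i - 1) u (cast (congrArg C.B (by omega : i = i - 1 + 1)) b)

/-- The data of `C` really is a bounded complex of graded free `A`-modules:
the differential is homogeneous of internal degree `0` (a scalar entry preserves
the label, an `X`-entry lowers the label by `2`), squares to zero,
and the complex is supported in the finite window `|i| ≤ N`. -/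
def IsComplex (C : PC) : Prop :=
  (∀ i (b : C.B (i + 1)) (b' : C.B i),
      ((C.d i b b').fst ≠ 0 → C.deg (i + 1) b = C.deg i b') ∧
      ((C.d i b b').snd ≠ 0 → C.deg (i + 1) b = C.deg i b' - 2)) ∧
  (∀ i (b : C.B (i + 1 + 1)) (b' : C.B i), (∑ m, C.d (i + 1) b m * C.d i m b') = 0) ∧
  (∀ i : ℤ, (C.N : ℤ) < |i| → IsEmpty (C.B i))

/-- `w` is a homogeneous cochain of internal degree `j`. -/
def homOf (C : PC) (i j : ℤ) (w : C.B i → A) : Prop :=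
  ∀ b, ((w b).fst ≠ 0 → C.deg i b - 1 = j) ∧ ((w b).snd ≠ 0 → C.deg i b + 1 = j)

/-- `w` is a coboundary. -/
def IsBd (C : PC) (i : ℤ) (w : C.B i → A) : Prop := ∃ u, C.Dto i u = w

/-- The cohomology of `C` in bidegree `(i, j)` is nonzero. -/
def HNZ (C : PC) (i j : ℤ) : Prop :=
  ∃ w : C.B i → A, C.D i w = 0 ∧ C.homOf i j w ∧ ¬ C.IsBd i w

/-- `C` is acyclic (has trivial cohomology). -/
def Acyclic (C : PC) : Prop := ∀ i (w : C.B i → A), C.D i w = 0 → C.IsBd i w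

/-- `C` is a nonzero complex. -/
def Nontriv (C : PC) : Prop := ∃ i : ℤ, Nonempty (C.B i)

/-- All nonzero cohomology of `C` lies on (at most) `m` adjacent diagonals
`2i + j = const`. -/
def widthLE (C : PC) (m : ℕ) : Prop :=
  ∃ b₀ : ℤ, ∀ i j : ℤ, C.HNZ i j → b₀ ≤ 2 * i + j ∧ 2 * i + j ≤ b₀ + 2 * ((m : ℤ) - 1)

/-- The homological width of `C` is exactly `m`. -/
def hwIs (C : PC) (m : ℕ) : Prop := C.widthLE m ∧ ∀ m' : ℕ, m' < m → ¬ C.widthLE m'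

end PC

/-- An isomorphism of complexes of graded free `A`-modules `C ≅ C'`, given by
mutually inverse degree-preserving chain maps, written in matrix form. -/
structure PCIso (C C' : PC) where
  f : ∀ i, C'.B i → C.B i → A
  g : ∀ i, C.B i → C'.B i → A
  f_homog : ∀ i b b',
    ((f i b b').fst ≠ 0 → C'.deg i b = C.deg i b') ∧
    ((f i b b').snd ≠ 0 → C'.deg i b = C.deg i b' - 2)
  g_homog : ∀ i b b',
    ((g i b b').fst ≠ 0 → C.deg i b = C'.deg i b') ∧
    ((g i b b').snd ≠ 0 → C.deg i b = C'.deg i b' - 2)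
  f_chain : ∀ i (b : C'.B (i + 1)) (b' : C.B i),
    (∑ m, f (i + 1) b m * C.d i m b') = ∑ m, C'.d i b m * f i m b'
  g_chain : ∀ i (b : C.B (i + 1)) (b' : C'.B i),
    (∑ m, g (i + 1) b m * C'.d i m b') = ∑ m, C.d i b m * g i m b'
  left_inv : ∀ i (b b' : C.B i),
    (∑ m, g i b m * f i m b') = if b = b' then 1 else 0
  right_inv : ∀ i (b b' : C'.B i),
    (∑ m, f i b m * g i m b') = if b = b' then 1 else 0

/-- The direct sum, over `k : Fin K` with parameters `p k = (n, i₀, j₀)`, of the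
shifted indecomposable complexes `C_n[i₀]{j₀}`:  the `k`-th summand is the complex
`0 → A{j₀} → A{j₀ - 2} → ⋯ → A{j₀ - 2n} → 0` (differentials are multiplication by
`X`) supported in homological degrees `i₀, …, i₀ + n`. -/
def stdCn (K : ℕ) (p : Fin K → ℕ × ℤ × ℤ) : PC where
  N := Finset.univ.sup fun k => (p k).2.1.natAbs + (p k).1
  B t := {k : Fin K // (p k).2.1 ≤ t ∧ t ≤ (p k).2.1 + (p k).1}
  fin _ := Subtype.fintype _
  deg t b := (p b.1).2.2 - 2 * (t - (p b.1).2.1)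
  d _ b b' := if b.1 = b'.1 then Aeps else 0

/-- The complex `C_n = (0 → A → A{-2} → ⋯ → A{-2n} → 0)`. -/
def Cn (n : ℕ) : PC := stdCn 1 fun _ => (n, 0, 0)

/-- Direct sum of two complexes. -/
def PC.dsum (C C' : PC) : PC where
  N := max C.N C'.N
  B i := C.B i ⊕ C'.B i
  fin _ := inferInstance
  deg i := Sum.elim (C.deg i) (C'.deg i)
  d i b b' :=
    match b, b' with
    | Sum.inl x, Sum.inl y => C.d i x y
    | Sum.inr x, Sum.inr y => C'.d i x y
    | _, _ => 0

/-- The tensor product `C ⊗_A C'` (total complex, with the Koszul sign rule). -/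
def PC.tensor (C C' : PC) : PC where
  N := C.N + C'.N
  B t := Σ p : (Finset.Icc (-(C.N : ℤ)) (C.N : ℤ)), C.B p × C'.B (t - p)
  fin _ := inferInstance
  deg _ x := C.deg _ x.2.1 + C'.deg _ x.2.2
  d t x y :=
    (if h : (x.1 : ℤ) = (y.1 : ℤ) + 1 then
        C.d (y.1 : ℤ) (cast (congrArg C.B h) x.2.1) y.2.1 *
          (if cast (congrArg C'.B (show t + 1 - (x.1 : ℤ) = t - (y.1 : ℤ) by omega)) x.2.2
              = y.2.2 then 1 else 0)
      else 0)
    +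
    (if h : (x.1 : ℤ) = (y.1 : ℤ) then
        (if (cast (congrArg C.B h) x.2.1 : C.B (y.1 : ℤ)) = y.2.1 then 1 else 0) *
          (if Even ((y.1 : ℤ)) then (1 : A) else -1) *
          C'.d (t - (y.1 : ℤ))
            (cast (congrArg C'.B (show t + 1 - (x.1 : ℤ) = t - (y.1 : ℤ) + 1 by omega)) x.2.2)
            y.2.2
      else 0)

namespace PC

/-- The reduced differential: the complex `C ⊗_A Q`, `Q = A/XA`. -/
def Dred (C : PC) (i : ℤ) (v : C.B i → ℚ) : C.B (i + 1) → ℚ :=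
  fun b => ∑ b', (C.d i b b').fst * v b'

/-- Reduced differential arriving in degree `i`. -/
def Dredto (C : PC) (i : ℤ) (u : C.B (i - 1) → ℚ) : C.B i → ℚ :=
  fun b => C.Dred (i - 1) u (cast (congrArg C.B (by omega : i = i - 1 + 1)) b)

def redIsBd (C : PC) (i : ℤ) (w : C.B i → ℚ) : Prop := ∃ u, C.Dredto i u = w

/-- The reduced cohomology of `C` in bidegree `(i, j)` is nonzero. -/
def redHNZ (C : PC) (i j : ℤ) : Prop :=
  ∃ w : C.B i → ℚ, (∀ b, w b ≠ 0 → C.deg i b - 1 = j) ∧ C.Dred i w = 0 ∧ ¬ C.redIsBd i w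

/-- The differential as a `ℚ`-linear map. -/
def DLin (C : PC) (i : ℤ) : (C.B i → A) →ₗ[ℚ] (C.B (i + 1) → A) where
  toFun := C.D i
  map_add' u v := by
    funext b
    simp [PC.D, mul_add, Finset.sum_add_distrib]
  map_smul' c v := by
    funext b
    simp [PC.D, Finset.smul_sum, mul_smul_comm]

def DtoLin (C : PC) (i : ℤ) : (C.B (i - 1) → A) →ₗ[ℚ] (C.B i → A) :=
  (LinearMap.funLeft ℚ A fun b => cast (congrArg C.B (by omega : i = i - 1 + 1)) b).comp
    (C.DLin (i - 1))

/-- Dimension of cohomology in homological degree `i` (as a `ℚ`-vector space). -/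
def dimH (C : PC) (i : ℤ) : ℕ :=
  Module.finrank ℚ (LinearMap.ker (C.DLin i)) -
    Module.finrank ℚ (LinearMap.range (C.DtoLin i))

/-- Total dimension of the cohomology of `C`. -/
def totalH (C : PC) : ℕ :=
  ∑ i ∈ Finset.Icc (-(C.N : ℤ) - 1) ((C.N : ℤ) + 1), C.dimH i

/-- The reduced differential as a `ℚ`-linear map. -/
def DredLin (C : PC) (i : ℤ) : (C.B i → ℚ) →ₗ[ℚ] (C.B (i + 1) → ℚ) where
  toFun := C.Dred i
  map_add' u v := by
    funext b
    simp [PC.Dred, mul_add, Finset.sum_add_distrib]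
  map_smul' c v := by
    funext b
    simp only [PC.Dred, RingHom.id_apply, Pi.smul_apply, smul_eq_mul, Finset.mul_sum]
    exact Finset.sum_congr rfl fun x _ => by ring

def DredtoLin (C : PC) (i : ℤ) : (C.B (i - 1) → ℚ) →ₗ[ℚ] (C.B i → ℚ) :=
  (LinearMap.funLeft ℚ ℚ fun b => cast (congrArg C.B (by omega : i = i - 1 + 1)) b).comp
    (C.DredLin (i - 1))

/-- Dimension of reduced cohomology in homological degree `i`. -/
def dimRedH (C : PC) (i : ℤ) : ℕ :=
  Module.finrank ℚ (LinearMap.ker (C.DredLin i)) -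
    Module.finrank ℚ (LinearMap.range (C.DredtoLin i))

/-- Total dimension of the reduced cohomology of `C`. -/
def totalRedH (C : PC) : ℕ :=
  ∑ i ∈ Finset.Icc (-(C.N : ℤ) - 1) ((C.N : ℤ) + 1), C.dimRedH i

end PC

/-- `C` is H-restricted: modulo an acyclic summand, it is the direct sum of exactly
one copy of `A{i₀}` (i.e. `C_0{i₀}`, in homological degree `0`) and finitely many
shifted copies of `C_1`. -/
def HRestr (C : PC) : Prop :=
  ∃ (i₀ : ℤ) (K : ℕ) (p : Fin (K + 1) → ℕ × ℤ × ℤ) (E : PC),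
    p 0 = (0, 0, i₀) ∧ (∀ k, k ≠ 0 → (p k).1 = 1) ∧
    E.IsComplex ∧ E.Acyclic ∧ Nonempty (PCIso C ((stdCn (K + 1) p).dsum E))

end

lemma cast_val (K : ℕ) (p : Fin K → ℕ × ℤ × ℤ) {i i' : ℤ} (h : i = i')
    (b : (stdCn K p).B i) : (cast (congrArg (stdCn K p).B h) b).1 = b.1 := by
  subst h; rfl

lemma Aeps_ne_zero : Aeps ≠ 0 := by
  intro h
  have := congrArg TrivSqZeroExt.snd h
  simp [Aeps] at this

lemma d_fst (K : ℕ) (p : Fin K → ℕ × ℤ × ℤ) (i : ℤ) (b : (stdCn K p).B (i + 1))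
    (b' : (stdCn K p).B i) : ((stdCn K p).d i b b').fst = 0 := by
  show (if b.1 = b'.1 then Aeps else 0).fst = 0
  split <;> simp [Aeps]

lemma topHNZ (K : ℕ) (p : Fin K → ℕ × ℤ × ℤ) (k : Fin K) :
    (stdCn K p).HNZ ((p k).2.1 + (p k).1) ((p k).2.2 - 2 * (p k).1 - 1) := by
  set C := stdCn K p with hC
  set i : ℤ := (p k).2.1 + (p k).1 with hi
  haveI : DecidableEq (C.B i) := Classical.decEq _
  obtain ⟨bt, hbt⟩ : ∃ b : C.B i, b.1 = k := ⟨⟨k, by omega, by omega⟩, rfl⟩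
  refine ⟨fun b => if b = bt then 1 else 0, ?_, ?_, ?_⟩
  · funext b
    have hb : b.1 ≠ k := by
      intro h
      have := b.2.2
      rw [h] at this
      omega
    show (∑ b', C.d i b b' * (if b' = bt then 1 else 0)) = 0
    simp only [mul_ite, mul_one, mul_zero, Finset.sum_ite_eq', Finset.mem_univ, if_true]
    show (if b.1 = bt.1 then Aeps else 0) = 0
    rw [hbt, if_neg hb]
  · intro b
    constructor
    · intro hfst
      have hb : b = bt := by
        by_contra h
        simp [h] at hfst
      have hdeg : C.deg i b = (p k).2.2 - 2 * (i - (p k).2.1) := by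
        show (p b.1).2.2 - 2 * (i - (p b.1).2.1) = _
        rw [hb, hbt]
      rw [hdeg]
      omega
    · intro hsnd
      exfalso
      by_cases h : b = bt <;> simp [h] at hsnd
  · rintro ⟨u, hu⟩
    have h1 := congrFun hu bt
    have h2 : (C.Dto i u bt).fst = 0 := by
      show (C.D (i-1) u (cast (congrArg C.B (by omega : i = i - 1 + 1)) bt)).fst = 0
      show (∑ b', C.d (i-1) _ b' * u b').fst = 0
      rw [TrivSqZeroExt.fst_sum]
      refine Finset.sum_eq_zero fun b' _ => ?_
      rw [TrivSqZeroExt.fst_mul, d_fst, zero_mul]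
    rw [h1, if_pos rfl] at h2
    simp at h2

lemma botHNZ (K : ℕ) (p : Fin K → ℕ × ℤ × ℤ) (k : Fin K) :
    (stdCn K p).HNZ (p k).2.1 ((p k).2.2 + 1) := by
  set C := stdCn K p with hC
  set i : ℤ := (p k).2.1 with hi
  haveI : DecidableEq (C.B i) := Classical.decEq _
  obtain ⟨bb, hbb⟩ : ∃ b : C.B i, b.1 = k := ⟨⟨k, by omega, by omega⟩, rfl⟩
  refine ⟨fun b => if b = bb then Aeps else 0, ?_, ?_, ?_⟩
  · funext b
    show (∑ b', C.d i b b' * (if b' = bb then Aeps else 0)) = 0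
    simp only [mul_ite, mul_zero, Finset.sum_ite_eq', Finset.mem_univ, if_true]
    show (if b.1 = bb.1 then Aeps else 0) * Aeps = 0
    split
    · show Aeps * Aeps = 0
      simp [Aeps, DualNumber.eps_mul_eps]
    · exact zero_mul _
  · intro b
    constructor
    · intro hfst
      exfalso
      by_cases h : b = bb <;> simp [h, Aeps] at hfst
    · intro hsnd
      have hb : b = bb := by
        by_contra h
        simp [h] at hsnd
      have hdeg : C.deg i b = (p k).2.2 - 2 * (i - (p k).2.1) := by
        show (p b.1).2.2 - 2 * (i - (p b.1).2.1) = _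
        rw [hb, hbb]
      rw [hdeg]
      omega
  · rintro ⟨u, hu⟩
    have h1 := congrFun hu bb
    have key : ∀ (h : i = i - 1 + 1) (b' : C.B (i - 1)),
        C.d (i-1) (cast (congrArg C.B h) bb) b' * u b' = 0 := by
      intro h b'
      have hne : (cast (congrArg C.B h) bb).1 ≠ b'.1 := by
        rw [cast_val K p h, hbb]
        intro he
        have h3 := b'.2.1
        rw [← he] at h3
        omega
      show (if _ = b'.1 then Aeps else 0) * u b' = 0
      rw [if_neg hne, zero_mul]
    have h2 : C.Dto i u bb = 0 := by
      show (C.D (i-1) u (cast (congrArg C.B (by omega : i = i - 1 + 1)) bb)) = 0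
      exact Finset.sum_eq_zero fun b' _ => key (by omega) b'
    rw [h1, if_pos rfl] at h2
    exact Aeps_ne_zero h2

/-- The cohomology of a (nonempty) direct sum of shifted copies `C_{n_k}[i_k]{j_k}`
of the complexes `C_n` never lies on a single diagonal `2i + j = const`; i.e. its
homological width is at least `2`. -/
theorem stmt5 (K : ℕ) (hK : 1 ≤ K) (p : Fin K → ℕ × ℤ × ℤ) :
    ¬ (stdCn K p).widthLE 1 := by
  rintro ⟨b₀, hb⟩
  set k : Fin K := ⟨0, hK⟩
  have h1 := hb _ _ (topHNZ K p k)
  have h2 := hb _ _ (botHNZ K p k)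
  simp only [Nat.cast_one] at h1 h2
  omega
end

section
/- Over A = ℚ[X]/(X²), let Q = A/XA be the one-dimensional quotient module. For the complex C_n (0 → A →^X ⋯ →^X A{-2n} → 0), the reduced complex C_n ⊗_A Q has zero differentials, and its cohomology is one-dimensional in each homological degree 0, 1, …, n; moreover all of these cohomology groups lie on a single diagonal 2i + j = const. -/
/-- The reduced complex `C_n ⊗_A Q` (`Q = A/XA`) has zero differentials; its
cohomology is one-dimensional in each homological degree `0, …, n` (and zero
elsewhere), and all of it lies on the single diagonal `2i + j = -1`. -/
theorem stmt11 (n : ℕ) :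
    (∀ (i : ℤ) (v : (Cn n).B i → ℚ), (Cn n).Dred i v = 0) ∧
    (∀ k : ℕ, k ≤ n → (Cn n).redHNZ (k : ℤ) (-2 * (k : ℤ) - 1)) ∧
    (∀ i j : ℤ, (Cn n).redHNZ i j → 0 ≤ i ∧ i ≤ (n : ℤ) ∧ j = -2 * i - 1) ∧
    (∀ (i : ℤ) (v w : (Cn n).B i → ℚ), v ≠ 0 → ∃ c : ℚ, w = c • v) ∧
    (∀ i j : ℤ, (Cn n).redHNZ i j → 2 * i + j = -1) := by

  classical
  have hd : ∀ (i : ℤ) (b : (Cn n).B (i+1)) (b' : (Cn n).B i),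
      ((Cn n).d i b b').fst = 0 := by
    intro i b b'
    show (if b.1 = b'.1 then Aeps else 0).fst = 0
    split <;> simp [Aeps]
  have hDred : ∀ (i : ℤ) (v : (Cn n).B i → ℚ), (Cn n).Dred i v = 0 := by
    intro i v; funext b; simp [PC.Dred, hd]
  have hDredto : ∀ (i : ℤ) (u : (Cn n).B (i-1) → ℚ), (Cn n).Dredto i u = 0 := by
    intro i u; funext b
    show (Cn n).Dred (i-1) u _ = 0
    rw [hDred]; rfl
  have hdeg : ∀ (i : ℤ) (b : (Cn n).B i), (Cn n).deg i b = -2 * i := by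
    intro i b
    show (0 : ℤ) - 2 * (i - 0) = -2 * i
    ring
  have hsub : ∀ i : ℤ, Subsingleton ((Cn n).B i) := by
    intro i
    constructor
    intro a b
    exact Subtype.ext (Subsingleton.elim _ _)
  refine ⟨hDred, ?_, ?_, ?_, ?_⟩
  · intro k hk
    refine ⟨fun _ => 1, ?_, hDred _ _, ?_⟩
    · intro b _
      rw [hdeg]
    · rintro ⟨u, hu⟩
      rw [hDredto] at hu
      have hb : (Cn n).B (k : ℤ) :=
        ⟨0, show (0:ℤ) ≤ (k:ℤ) ∧ (k:ℤ) ≤ 0 + (n:ℕ) by omega⟩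
      have := congrFun hu hb
      simp at this
  · rintro i j ⟨w, hw, -, hnb⟩
    have : ∃ b, w b ≠ 0 := by
      by_contra h
      push_neg at h
      exact hnb ⟨fun _ => 0, by rw [hDredto]; funext b; exact (h b).symm⟩
    obtain ⟨b, hb⟩ := this
    have hj := hw b hb
    rw [hdeg] at hj
    have hk1 : (0:ℤ) ≤ i := b.2.1
    have hk2 : i ≤ 0 + (n:ℕ) := b.2.2
    refine ⟨by omega, by omega, by omega⟩
  · intro i v w hv
    have : ∃ b, v b ≠ 0 := by
      by_contra h
      push_neg at h
      exact hv (funext h)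
    obtain ⟨b, hb⟩ := this
    refine ⟨w b / v b, ?_⟩
    funext b'
    haveI := hsub i
    rw [Subsingleton.elim b' b]
    simp [div_mul_cancel₀ _ hb]
  · rintro i j ⟨w, hw, -, hnb⟩
    have : ∃ b, w b ≠ 0 := by
      by_contra h
      push_neg at h
      exact hnb ⟨fun _ => 0, by rw [hDredto]; funext b; exact (h b).symm⟩
    obtain ⟨b, hb⟩ := this
    have hj := hw b hb
    rw [hdeg] at hj
    omega
end

section
/- Let C be a bounded complex of free graded A-modules (A = ℚ[X]/(X²)) that decomposes, modulo acyclic summands, as a direct sum of shifted copies of complexes C_n. Then the cohomology of the reduced complex C ⊗_A Q lies on a single diagonal 2i + j = const if and only if the cohomology of C lies on two adjacent diagonals. -/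
noncomputable section

open Classical

namespace StmtAux

open TrivSqZeroExt

lemma eps_ne_zero' : (DualNumber.eps : A) ≠ 0 := by
  intro h
  have := congrArg TrivSqZeroExt.snd h
  rw [TrivSqZeroExt.snd_zero, DualNumber.eps, TrivSqZeroExt.snd_inr] at this
  exact one_ne_zero this

lemma Aeps_ne_zero : (Aeps : A) ≠ 0 := eps_ne_zero'

lemma fst_Aeps : (Aeps : A).fst = 0 := TrivSqZeroExt.fst_inr ℚ 1
lemma snd_Aeps : (Aeps : A).snd = 1 := TrivSqZeroExt.snd_inr ℚ 1

lemma fst_sum {α : Type} (s : Finset α) (f : α → A) :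
    (∑ i ∈ s, f i).fst = ∑ i ∈ s, (f i).fst :=
  map_sum (TrivSqZeroExt.fstHom ℚ ℚ ℚ) f s

lemma snd_sum {α : Type} (s : Finset α) (f : α → A) :
    (∑ i ∈ s, f i).snd = ∑ i ∈ s, (f i).snd := by
  classical
  induction s using Finset.induction with
  | empty => simp
  | insert a s h ih => rw [Finset.sum_insert h, Finset.sum_insert h, TrivSqZeroExt.snd_add, ih]

lemma snd_mul' (x y : A) : (x * y).snd = x.fst * y.snd + y.fst * x.snd := by
  rw [TrivSqZeroExt.snd_mul]; simp [mul_comm]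

/-- apply a matrix to a coordinate vector -/
def mapply {R : Type} [CommRing R] {α β : Type} [Fintype α]
    (M : β → α → R) (v : α → R) : β → R := fun b => ∑ a, M b a * v a

lemma mapply_comp {R : Type} [CommRing R] {α β γ : Type} [Fintype α] [Fintype β]
    (M : γ → β → R) (N : β → α → R) (v : α → R) :
    mapply M (mapply N v) = mapply (fun c a => ∑ b, M c b * N b a) v := by
  funext c
  simp only [mapply, Finset.mul_sum, Finset.sum_mul]
  rw [Finset.sum_comm]
  refine Finset.sum_congr rfl fun a _ => Finset.sum_congr rfl fun b _ => by ring

lemma mapply_zero {R : Type} [CommRing R] {α β : Type} [Fintype α] (M : β → α → R) :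
    mapply M (0 : α → R) = 0 := by
  funext b; simp [mapply]

lemma mapply_delta {R : Type} [CommRing R] {α : Type} [Fintype α] [DecidableEq α]
    (v : α → R) :
    mapply (fun b a => if b = a then (1:R) else 0) v = v := by
  funext b; simp [mapply, ite_mul]

lemma mapply_congr {R : Type} [CommRing R] {α β : Type} [Fintype α]
    (M M' : β → α → R) (h : ∀ b a, M b a = M' b a) (v : α → R) :
    mapply M v = mapply M' v := by
  funext b
  exact Finset.sum_congr rfl fun a _ => by rw [h]

namespace PCStuff

variable (C : PC)

lemma D_eq (i : ℤ) (w : C.B i → A) : C.D i w = mapply (C.d i) w := rfl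

lemma Dred_eq (i : ℤ) (w : C.B i → ℚ) :
    C.Dred i w = mapply (fun b b' => (C.d i b b').fst) w := rfl

/-- transport of `D` along an index equality -/
lemma D_transport {a b : ℤ} (h : a = b) (u : C.B a → A)
    (h1 : C.B b = C.B a) (h2 : C.B (b + 1) = C.B (a + 1)) (x : C.B (b + 1)) :
    C.D b (fun y => u (cast h1 y)) x = C.D a u (cast h2 x) := by
  subst h; rfl

lemma Dred_transport {a b : ℤ} (h : a = b) (u : C.B a → ℚ)
    (h1 : C.B b = C.B a) (h2 : C.B (b + 1) = C.B (a + 1)) (x : C.B (b + 1)) :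
    C.Dred b (fun y => u (cast h1 y)) x = C.Dred a u (cast h2 x) := by
  subst h; rfl

lemma cast_cast_self {T S : Type} (h1 : T = S) (h2 : S = T) (x : T) :
    cast h2 (cast h1 x) = x := by
  subst h1; rfl

lemma isBd_succ (i : ℤ) (w : C.B (i + 1) → A) :
    C.IsBd (i + 1) w ↔ ∃ u : C.B i → A, C.D i u = w := by
  constructor
  · rintro ⟨u, hu⟩
    refine ⟨fun y => u (cast (congrArg C.B (by omega : i = i + 1 - 1)) y), ?_⟩
    funext x
    rw [D_transport C (show i + 1 - 1 = i by omega) u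
      (congrArg C.B (by omega : i = i + 1 - 1))
      (congrArg C.B (by omega : i + 1 = i + 1 - 1 + 1)) x]
    exact congrFun hu x
  · rintro ⟨u, hu⟩
    refine ⟨fun y => u (cast (congrArg C.B (by omega : i + 1 - 1 = i)) y), ?_⟩
    funext x
    show C.D (i + 1 - 1) _ (cast (congrArg C.B (by omega : i + 1 = i + 1 - 1 + 1)) x) = w x
    rw [D_transport C (show i = i + 1 - 1 by omega) u
      (congrArg C.B (by omega : i + 1 - 1 = i))
      (congrArg C.B (by omega : i + 1 - 1 + 1 = i + 1))]
    rw [cast_cast_self]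
    exact congrFun hu x

lemma redIsBd_succ (i : ℤ) (w : C.B (i + 1) → ℚ) :
    C.redIsBd (i + 1) w ↔ ∃ u : C.B i → ℚ, C.Dred i u = w := by
  constructor
  · rintro ⟨u, hu⟩
    refine ⟨fun y => u (cast (congrArg C.B (by omega : i = i + 1 - 1)) y), ?_⟩
    funext x
    rw [Dred_transport C (show i + 1 - 1 = i by omega) u
      (congrArg C.B (by omega : i = i + 1 - 1))
      (congrArg C.B (by omega : i + 1 = i + 1 - 1 + 1)) x]
    exact congrFun hu x
  · rintro ⟨u, hu⟩
    refine ⟨fun y => u (cast (congrArg C.B (by omega : i + 1 - 1 = i)) y), ?_⟩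
    funext x
    show C.Dred (i + 1 - 1) _ (cast (congrArg C.B (by omega : i + 1 = i + 1 - 1 + 1)) x) = w x
    rw [Dred_transport C (show i = i + 1 - 1 by omega) u
      (congrArg C.B (by omega : i + 1 - 1 = i))
      (congrArg C.B (by omega : i + 1 - 1 + 1 = i + 1))]
    rw [cast_cast_self]
    exact congrFun hu x

lemma zero_isBd (i : ℤ) : C.IsBd i (0 : C.B i → A) := by
  refine ⟨0, ?_⟩
  funext b
  show C.D (i - 1) 0 _ = 0
  simp [PC.D]

lemma zero_redIsBd (i : ℤ) : C.redIsBd i (0 : C.B i → ℚ) := by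
  refine ⟨0, ?_⟩
  funext b
  show C.Dred (i - 1) 0 _ = 0
  simp [PC.Dred]

lemma DD_zero (hC : C.IsComplex) (i : ℤ) (w : C.B i → A) :
    C.D (i + 1) (C.D i w) = 0 := by
  funext b
  show (∑ m, C.d (i + 1) b m * ∑ b', C.d i m b' * w b') = 0
  have : (∑ m, C.d (i + 1) b m * ∑ b', C.d i m b' * w b')
      = ∑ b', (∑ m, C.d (i + 1) b m * C.d i m b') * w b' := by
    simp only [Finset.mul_sum, Finset.sum_mul]
    rw [Finset.sum_comm]
    refine Finset.sum_congr rfl fun b' _ => Finset.sum_congr rfl fun m _ => by ring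
  rw [this]
  simp [hC.2.1 i b]

end PCStuff
end StmtAux

namespace StmtAux

lemma sum_delta_mul {R : Type} [CommRing R] {α : Type} [Fintype α]
    {dec : (x y : α) → Decidable (x = y)} (v : α → R) (b : α) :
    (∑ a, (if b = a then (1 : R) else 0) * v a) = v b := by
  rw [Finset.sum_eq_single b]
  · rw [if_pos rfl, one_mul]
  · intro a _ hne
    rw [if_neg (fun h => hne h.symm), zero_mul]
  · intro h; exact absurd (Finset.mem_univ b) h

namespace PCStuff

variable {C C' : PC}

def isoSymm (e : PCIso C C') : PCIso C' C where
  f := e.g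
  g := e.f
  f_homog := e.g_homog
  g_homog := e.f_homog
  f_chain := e.g_chain
  g_chain := e.f_chain
  left_inv := e.right_inv
  right_inv := e.left_inv

lemma f_D (e : PCIso C C') (i : ℤ) (w : C.B i → A) :
    mapply (e.f (i + 1)) (C.D i w) = C'.D i (mapply (e.f i) w) := by
  rw [D_eq, D_eq, mapply_comp, mapply_comp]
  exact mapply_congr _ _ (fun b a => e.f_chain i b a) w

lemma g_D (e : PCIso C C') (i : ℤ) (w : C'.B i → A) :
    mapply (e.g (i + 1)) (C'.D i w) = C.D i (mapply (e.g i) w) := by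
  rw [D_eq, D_eq, mapply_comp, mapply_comp]
  exact mapply_congr _ _ (fun b a => e.g_chain i b a) w

lemma gf_id (e : PCIso C C') (i : ℤ) (w : C.B i → A) :
    mapply (e.g i) (mapply (e.f i) w) = w := by
  rw [mapply_comp]
  funext b
  show (∑ a, (∑ m, e.g i b m * e.f i m a) * w a) = w b
  rw [show (∑ a, (∑ m, e.g i b m * e.f i m a) * w a)
      = ∑ a, (if b = a then (1 : A) else 0) * w a from
    Finset.sum_congr rfl fun a _ => by rw [e.left_inv]]
  exact sum_delta_mul w b

lemma homog_mapply (e : PCIso C C') (i j : ℤ) (w : C.B i → A) (hw : C.homOf i j w) :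
    C'.homOf i j (mapply (e.f i) w) := by
  intro b
  constructor
  · intro hfst
    rw [show (mapply (e.f i) w b).fst = ∑ m, (e.f i b m).fst * (w m).fst by
      rw [show mapply (e.f i) w b = ∑ m, e.f i b m * w m from rfl, fst_sum]
      exact Finset.sum_congr rfl fun m _ => TrivSqZeroExt.fst_mul _ _] at hfst
    obtain ⟨m, _, hm⟩ := Finset.exists_ne_zero_of_sum_ne_zero hfst
    have h1 : (e.f i b m).fst ≠ 0 := fun h => hm (by rw [h, zero_mul])
    have h2 : (w m).fst ≠ 0 := fun h => hm (by rw [h, mul_zero])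
    have := (e.f_homog i b m).1 h1
    have := (hw m).1 h2
    omega
  · intro hsnd
    rw [show (mapply (e.f i) w b).snd
        = ∑ m, ((e.f i b m).fst * (w m).snd + (w m).fst * (e.f i b m).snd) by
      rw [show mapply (e.f i) w b = ∑ m, e.f i b m * w m from rfl, snd_sum]
      exact Finset.sum_congr rfl fun m _ => snd_mul' _ _] at hsnd
    obtain ⟨m, _, hm⟩ := Finset.exists_ne_zero_of_sum_ne_zero hsnd
    have hor : (e.f i b m).fst * (w m).snd ≠ 0 ∨ (w m).fst * (e.f i b m).snd ≠ 0 := by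
      by_contra hc
      push_neg at hc
      exact hm (by rw [hc.1, hc.2, add_zero])
    rcases hor with h | h
    · obtain ⟨h1, h2⟩ := mul_ne_zero_iff.1 h
      have := (e.f_homog i b m).1 h1
      have := (hw m).2 h2
      omega
    · obtain ⟨h1, h2⟩ := mul_ne_zero_iff.1 h
      have := (e.f_homog i b m).2 h2
      have := (hw m).1 h1
      omega

lemma hnz_transfer (e : PCIso C C') (i j : ℤ) (h : C.HNZ (i + 1) j) :
    C'.HNZ (i + 1) j := by
  obtain ⟨w, hw0, hwh, hwb⟩ := h
  refine ⟨mapply (e.f (i + 1)) w, ?_, homog_mapply e _ _ w hwh, ?_⟩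
  · rw [← f_D e (i + 1) w, hw0, mapply_zero]
  · rw [isBd_succ]
    rintro ⟨u', hu'⟩
    apply hwb
    rw [isBd_succ]
    refine ⟨mapply (e.g i) u', ?_⟩
    rw [← g_D e i u', hu', gf_id]

/-- reduced matrix of `f` -/
def fr (e : PCIso C C') (i : ℤ) : C'.B i → C.B i → ℚ := fun b b' => (e.f i b b').fst

def gr (e : PCIso C C') (i : ℤ) : C.B i → C'.B i → ℚ := fun b b' => (e.g i b b').fst

lemma fr_Dred (e : PCIso C C') (i : ℤ) (w : C.B i → ℚ) :
    mapply (fr e (i + 1)) (C.Dred i w) = C'.Dred i (mapply (fr e i) w) := by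
  rw [Dred_eq, Dred_eq, mapply_comp, mapply_comp]
  refine mapply_congr _ _ (fun b a => ?_) w
  have := congrArg TrivSqZeroExt.fst (e.f_chain i b a)
  rw [fst_sum, fst_sum] at this
  show (∑ m, fr e (i + 1) b m * (C.d i m a).fst) = ∑ m, (C'.d i b m).fst * fr e i m a
  simpa [fr, TrivSqZeroExt.fst_mul] using this

lemma gr_Dred (e : PCIso C C') (i : ℤ) (w : C'.B i → ℚ) :
    mapply (gr e (i + 1)) (C'.Dred i w) = C.Dred i (mapply (gr e i) w) := by
  rw [Dred_eq, Dred_eq, mapply_comp, mapply_comp]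
  refine mapply_congr _ _ (fun b a => ?_) w
  have := congrArg TrivSqZeroExt.fst (e.g_chain i b a)
  rw [fst_sum, fst_sum] at this
  show (∑ m, gr e (i + 1) b m * (C'.d i m a).fst) = ∑ m, (C.d i b m).fst * gr e i m a
  simpa [gr, TrivSqZeroExt.fst_mul] using this

lemma gf_red_id (e : PCIso C C') (i : ℤ) (w : C.B i → ℚ) :
    mapply (gr e i) (mapply (fr e i) w) = w := by
  rw [mapply_comp]
  funext b
  show (∑ a, (∑ m, gr e i b m * fr e i m a) * w a) = w b
  rw [show (∑ a, (∑ m, gr e i b m * fr e i m a) * w a)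
      = ∑ a, (if b = a then (1 : ℚ) else 0) * w a from
    Finset.sum_congr rfl fun a _ => by
      congr 1
      have := congrArg TrivSqZeroExt.fst (e.left_inv i b a)
      rw [fst_sum] at this
      rw [show (∑ m, gr e i b m * fr e i m a) = ∑ m, (e.g i b m * e.f i m a).fst from
        Finset.sum_congr rfl fun m _ => (TrivSqZeroExt.fst_mul _ _).symm, this]
      split <;> simp]
  exact sum_delta_mul w b

lemma red_homog_mapply (e : PCIso C C') (i j : ℤ) (w : C.B i → ℚ)
    (hw : ∀ b, w b ≠ 0 → C.deg i b - 1 = j) :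
    ∀ b, mapply (fr e i) w b ≠ 0 → C'.deg i b - 1 = j := by
  intro b hb
  obtain ⟨m, _, hm⟩ := Finset.exists_ne_zero_of_sum_ne_zero hb
  have h1 : fr e i b m ≠ 0 := fun h => hm (by rw [h, zero_mul])
  have h2 : w m ≠ 0 := fun h => hm (by rw [h, mul_zero])
  have := (e.f_homog i b m).1 h1
  have := hw m h2
  omega

lemma red_hnz_transfer (e : PCIso C C') (i j : ℤ) (h : C.redHNZ (i + 1) j) :
    C'.redHNZ (i + 1) j := by
  obtain ⟨w, hwh, hw0, hwb⟩ := h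
  refine ⟨mapply (fr e (i + 1)) w, red_homog_mapply e _ _ w hwh, ?_, ?_⟩
  · rw [← fr_Dred e (i + 1) w, hw0, mapply_zero]
  · rw [redIsBd_succ]
    rintro ⟨u', hu'⟩
    apply hwb
    rw [redIsBd_succ]
    refine ⟨mapply (gr e i) u', ?_⟩
    rw [← gr_Dred e i u', hu', gf_red_id]

end PCStuff
end StmtAux

namespace StmtAux
namespace PCStuff

variable {C C' : PC}

lemma dsum_D_inl (i : ℤ) (w : (C.dsum C').B i → A) (b : C.B (i + 1)) :
    (C.dsum C').D i w (Sum.inl b) = C.D i (w ∘ Sum.inl) b := by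
  show (∑ x : C.B i ⊕ C'.B i, (C.dsum C').d i (Sum.inl b) x * w x) = _
  rw [Fintype.sum_sum_type]
  have h2 : (∑ y : C'.B i, (C.dsum C').d i (Sum.inl b) (Sum.inr y) * w (Sum.inr y)) = 0 := by
    refine Finset.sum_eq_zero fun y _ => ?_
    show (0 : A) * _ = 0
    rw [zero_mul]
  rw [h2, add_zero]
  rfl

lemma dsum_D_inr (i : ℤ) (w : (C.dsum C').B i → A) (b : C'.B (i + 1)) :
    (C.dsum C').D i w (Sum.inr b) = C'.D i (w ∘ Sum.inr) b := by
  show (∑ x : C.B i ⊕ C'.B i, (C.dsum C').d i (Sum.inr b) x * w x) = _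
  rw [Fintype.sum_sum_type]
  have h1 : (∑ y : C.B i, (C.dsum C').d i (Sum.inr b) (Sum.inl y) * w (Sum.inl y)) = 0 := by
    refine Finset.sum_eq_zero fun y _ => ?_
    show (0 : A) * _ = 0
    rw [zero_mul]
  rw [h1, zero_add]
  rfl

lemma dsum_Dred_inl (i : ℤ) (w : (C.dsum C').B i → ℚ) (b : C.B (i + 1)) :
    (C.dsum C').Dred i w (Sum.inl b) = C.Dred i (w ∘ Sum.inl) b := by
  show (∑ x : C.B i ⊕ C'.B i, ((C.dsum C').d i (Sum.inl b) x).fst * w x) = _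
  rw [Fintype.sum_sum_type]
  have h2 : (∑ y : C'.B i, ((C.dsum C').d i (Sum.inl b) (Sum.inr y)).fst * w (Sum.inr y)) = 0 := by
    refine Finset.sum_eq_zero fun y _ => ?_
    show (0 : A).fst * _ = 0
    rw [TrivSqZeroExt.fst_zero, zero_mul]
  rw [h2, add_zero]
  rfl

lemma dsum_Dred_inr (i : ℤ) (w : (C.dsum C').B i → ℚ) (b : C'.B (i + 1)) :
    (C.dsum C').Dred i w (Sum.inr b) = C'.Dred i (w ∘ Sum.inr) b := by
  show (∑ x : C.B i ⊕ C'.B i, ((C.dsum C').d i (Sum.inr b) x).fst * w x) = _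
  rw [Fintype.sum_sum_type]
  have h1 : (∑ y : C.B i, ((C.dsum C').d i (Sum.inr b) (Sum.inl y)).fst * w (Sum.inl y)) = 0 := by
    refine Finset.sum_eq_zero fun y _ => ?_
    show (0 : A).fst * _ = 0
    rw [TrivSqZeroExt.fst_zero, zero_mul]
  rw [h1, zero_add]
  rfl

lemma dsum_hnz_cases (i j : ℤ) (h : (C.dsum C').HNZ (i + 1) j) :
    C.HNZ (i + 1) j ∨ C'.HNZ (i + 1) j := by
  obtain ⟨w, hw0, hwh, hwb⟩ := h
  have h10 : C.D (i + 1) (w ∘ Sum.inl) = 0 := by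
    funext b
    have := congrFun hw0 (Sum.inl b)
    rw [dsum_D_inl] at this
    exact this
  have h20 : C'.D (i + 1) (w ∘ Sum.inr) = 0 := by
    funext b
    have := congrFun hw0 (Sum.inr b)
    rw [dsum_D_inr] at this
    exact this
  rcases Classical.em (C.IsBd (i + 1) (w ∘ Sum.inl)) with h1 | h1
  · rcases Classical.em (C'.IsBd (i + 1) (w ∘ Sum.inr)) with h2 | h2
    · exfalso
      apply hwb
      rw [isBd_succ] at h1 h2 ⊢
      obtain ⟨u₁, hu₁⟩ := h1
      obtain ⟨u₂, hu₂⟩ := h2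
      refine ⟨Sum.elim u₁ u₂, ?_⟩
      funext b
      cases b with
      | inl b =>
          rw [dsum_D_inl (C := C) (C' := C') i (Sum.elim u₁ u₂) b]
          exact congrFun hu₁ b
      | inr b =>
          rw [dsum_D_inr (C := C) (C' := C') i (Sum.elim u₁ u₂) b]
          exact congrFun hu₂ b
    · exact Or.inr ⟨w ∘ Sum.inr, h20, fun b => hwh (Sum.inr b), h2⟩
  · exact Or.inl ⟨w ∘ Sum.inl, h10, fun b => hwh (Sum.inl b), h1⟩

lemma dsum_hnz_left (i j : ℤ) (h : C.HNZ (i + 1) j) : (C.dsum C').HNZ (i + 1) j := by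
  obtain ⟨w₁, hw0, hwh, hwb⟩ := h
  refine ⟨Sum.elim w₁ 0, ?_, ?_, ?_⟩
  · funext b
    cases b with
    | inl b =>
        rw [dsum_D_inl (C := C) (C' := C') (i + 1) (Sum.elim w₁ 0) b]
        exact congrFun hw0 b
    | inr b =>
        rw [dsum_D_inr (C := C) (C' := C') (i + 1) (Sum.elim w₁ 0) b]
        show C'.D (i + 1) (fun _ => 0) b = 0
        show (∑ m, C'.d (i + 1) b m * 0) = 0
        simp
  · intro b
    cases b with
    | inl b => exact hwh b
    | inr b =>
        constructor
        · intro hf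
          exact absurd TrivSqZeroExt.fst_zero hf
        · intro hs
          exact absurd TrivSqZeroExt.snd_zero hs
  · intro hbd
    apply hwb
    rw [isBd_succ (C.dsum C') i (Sum.elim w₁ 0)] at hbd
    rw [isBd_succ] at ⊢
    obtain ⟨u, hu⟩ := hbd
    refine ⟨u ∘ Sum.inl, ?_⟩
    funext b
    have := congrFun hu (Sum.inl b)
    rw [dsum_D_inl] at this
    exact this

lemma dsum_red_cases (i j : ℤ) (h : (C.dsum C').redHNZ (i + 1) j) :
    C.redHNZ (i + 1) j ∨ C'.redHNZ (i + 1) j := by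
  obtain ⟨w, hwh, hw0, hwb⟩ := h
  have h10 : C.Dred (i + 1) (w ∘ Sum.inl) = 0 := by
    funext b
    have := congrFun hw0 (Sum.inl b)
    rw [dsum_Dred_inl] at this
    exact this
  have h20 : C'.Dred (i + 1) (w ∘ Sum.inr) = 0 := by
    funext b
    have := congrFun hw0 (Sum.inr b)
    rw [dsum_Dred_inr] at this
    exact this
  rcases Classical.em (C.redIsBd (i + 1) (w ∘ Sum.inl)) with h1 | h1
  · rcases Classical.em (C'.redIsBd (i + 1) (w ∘ Sum.inr)) with h2 | h2
    · exfalso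
      apply hwb
      rw [redIsBd_succ] at h1 h2 ⊢
      obtain ⟨u₁, hu₁⟩ := h1
      obtain ⟨u₂, hu₂⟩ := h2
      refine ⟨Sum.elim u₁ u₂, ?_⟩
      funext b
      cases b with
      | inl b =>
          rw [dsum_Dred_inl (C := C) (C' := C') i (Sum.elim u₁ u₂) b]
          exact congrFun hu₁ b
      | inr b =>
          rw [dsum_Dred_inr (C := C) (C' := C') i (Sum.elim u₁ u₂) b]
          exact congrFun hu₂ b
    · exact Or.inr ⟨w ∘ Sum.inr, fun b => hwh (Sum.inr b), h20, h2⟩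
  · exact Or.inl ⟨w ∘ Sum.inl, fun b => hwh (Sum.inl b), h10, h1⟩

lemma dsum_red_left (i j : ℤ) (h : C.redHNZ (i + 1) j) : (C.dsum C').redHNZ (i + 1) j := by
  obtain ⟨w₁, hwh, hw0, hwb⟩ := h
  refine ⟨Sum.elim w₁ 0, ?_, ?_, ?_⟩
  · intro b
    cases b with
    | inl b => exact hwh b
    | inr b => exact fun hn => absurd rfl hn
  · funext b
    cases b with
    | inl b =>
        rw [dsum_Dred_inl (C := C) (C' := C') (i + 1) (Sum.elim w₁ 0) b]
        exact congrFun hw0 b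
    | inr b =>
        rw [dsum_Dred_inr (C := C) (C' := C') (i + 1) (Sum.elim w₁ 0) b]
        show (∑ m, (C'.d (i + 1) b m).fst * 0) = 0
        simp
  · intro hbd
    apply hwb
    rw [redIsBd_succ (C.dsum C') i (Sum.elim w₁ 0)] at hbd
    rw [redIsBd_succ] at ⊢
    obtain ⟨u, hu⟩ := hbd
    refine ⟨u ∘ Sum.inl, ?_⟩
    funext b
    have := congrFun hu (Sum.inl b)
    rw [dsum_Dred_inl] at this
    exact this

end PCStuff
end StmtAux

namespace StmtAux
namespace PCStuff

open TrivSqZeroExt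

lemma fst_eps : (DualNumber.eps : A).fst = 0 := TrivSqZeroExt.fst_inr ℚ 1
lemma snd_eps : (DualNumber.eps : A).snd = 1 := TrivSqZeroExt.snd_inr ℚ 1

lemma fst_sub' (x y : A) : (x - y).fst = x.fst - y.fst := rfl

lemma fst_D (E : PC) (i : ℤ) (t : E.B i → A) (x : E.B (i + 1)) :
    (E.D i t x).fst = E.Dred i (fun y => (t y).fst) x := by
  show (∑ m, E.d i x m * t m).fst = ∑ m, (E.d i x m).fst * (t m).fst
  rw [fst_sum]
  exact Finset.sum_congr rfl fun m _ => TrivSqZeroExt.fst_mul _ _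

lemma fst_Dto (E : PC) (i : ℤ) (t : E.B (i - 1) → A) (b : E.B i) :
    (E.Dto i t b).fst = E.Dredto i (fun y => (t y).fst) b := by
  show (E.D (i - 1) t (cast (congrArg E.B (by omega : i = i - 1 + 1)) b)).fst
      = E.Dred (i - 1) (fun y => (t y).fst) (cast (congrArg E.B (by omega : i = i - 1 + 1)) b)
  rw [fst_D]

lemma acyclic_hnz_false (E : PC) (hEa : E.Acyclic) (i j : ℤ) : ¬ E.HNZ i j := by
  rintro ⟨w, h0, _, hb⟩
  exact hb (hEa i w h0)

lemma red_step (E : PC) (hE : E.IsComplex) (hEa : E.Acyclic) (i : ℤ)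
    (h : ∃ w : E.B i → ℚ, E.Dred i w = 0 ∧ ¬ E.redIsBd i w) :
    ∃ z : E.B (i + 1) → ℚ, E.Dred (i + 1) z = 0 ∧ ¬ E.redIsBd (i + 1) z := by
  obtain ⟨w, hw0, hwb⟩ := h
  set wA : E.B i → A := fun b => TrivSqZeroExt.inl (w b) with hwA
  set z : E.B (i + 1) → ℚ := fun b => (E.D i wA b).snd with hz
  have hfst : ∀ b, (E.D i wA b).fst = 0 := by
    intro b
    rw [fst_D]
    have : (fun y => (wA y).fst) = w := by
      funext y
      exact TrivSqZeroExt.fst_inl ℚ (w y)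
    rw [this, hw0]
    rfl
  have hDwA : E.D i wA = fun b => TrivSqZeroExt.inr (z b) := by
    funext b
    exact TrivSqZeroExt.ext (by rw [hfst b, TrivSqZeroExt.fst_inr]) (by rw [TrivSqZeroExt.snd_inr])
  refine ⟨z, ?_, ?_⟩
  · funext b
    have hDD := congrFun (DD_zero E hE i wA) b
    rw [hDwA] at hDD
    have hsnd := congrArg TrivSqZeroExt.snd hDD
    simp only [Pi.zero_apply, TrivSqZeroExt.snd_zero] at hsnd
    show (∑ m, (E.d (i + 1) b m).fst * z m) = 0
    rw [← hsnd]
    show _ = (∑ m, E.d (i + 1) b m * TrivSqZeroExt.inr (z m)).snd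
    rw [snd_sum]
    refine Finset.sum_congr rfl fun m _ => ?_
    rw [snd_mul', TrivSqZeroExt.snd_inr, TrivSqZeroExt.fst_inr, zero_mul, add_zero]
  · intro hzb
    rw [redIsBd_succ] at hzb
    obtain ⟨u, hu⟩ := hzb
    set v : E.B i → A := fun b => wA b - DualNumber.eps * TrivSqZeroExt.inl (u b) with hv
    have hv0 : E.D i v = 0 := by
      funext b
      show (∑ m, E.d i b m * (wA m - DualNumber.eps * TrivSqZeroExt.inl (u m))) = 0
      have expand : (∑ m, E.d i b m * (wA m - DualNumber.eps * TrivSqZeroExt.inl (u m)))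
          = (∑ m, E.d i b m * wA m)
            - DualNumber.eps * ∑ m, E.d i b m * TrivSqZeroExt.inl (u m) := by
        rw [Finset.mul_sum, ← Finset.sum_sub_distrib]
        refine Finset.sum_congr rfl fun m _ => by ring
      rw [expand]
      have h1 : (∑ m, E.d i b m * wA m) = TrivSqZeroExt.inr (z b) := congrFun hDwA b
      have h2 : DualNumber.eps * (∑ m, E.d i b m * TrivSqZeroExt.inl (u m))
          = TrivSqZeroExt.inr (z b) := by
        have hq : (∑ m, E.d i b m * TrivSqZeroExt.inl (u m)).fst = z b := by
          have := fst_D E i (fun m => TrivSqZeroExt.inl (u m)) b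
          have h3 : (fun y => (TrivSqZeroExt.inl (u y) : A).fst) = u := by
            funext y
            exact TrivSqZeroExt.fst_inl ℚ (u y)
          rw [h3] at this
          rw [show (∑ m, E.d i b m * TrivSqZeroExt.inl (u m)) = E.D i (fun m => TrivSqZeroExt.inl (u m)) b from rfl,
            this, hu]
        refine TrivSqZeroExt.ext ?_ ?_
        · rw [TrivSqZeroExt.fst_mul, TrivSqZeroExt.fst_inr]
          show (DualNumber.eps : A).fst * _ = 0
          rw [fst_eps, zero_mul]
        · rw [snd_mul', TrivSqZeroExt.snd_inr]
          show (DualNumber.eps : A).fst * _ + _ * (DualNumber.eps : A).snd = z b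
          rw [fst_eps, snd_eps, zero_mul, zero_add, mul_one, hq]
      rw [h1, h2, sub_self]
    obtain ⟨t, ht⟩ := hEa i v hv0
    apply hwb
    refine ⟨fun y => (t y).fst, ?_⟩
    funext b
    have hf := congrArg TrivSqZeroExt.fst (congrFun ht b)
    rw [fst_Dto] at hf
    rw [hf]
    show (wA b - DualNumber.eps * TrivSqZeroExt.inl (u b)).fst = w b
    rw [fst_sub', TrivSqZeroExt.fst_mul]
    show (wA b).fst - (DualNumber.eps : A).fst * _ = w b
    rw [fst_eps, zero_mul, sub_zero, hwA]
    exact TrivSqZeroExt.fst_inl ℚ (w b)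

lemma acyclic_red_false (E : PC) (hE : E.IsComplex) (hEa : E.Acyclic) (i j : ℤ) :
    ¬ E.redHNZ i j := by
  rintro ⟨w, _, hw0, hwb⟩
  have key : ∀ m : ℕ, ∃ z : E.B (i + (m : ℤ)) → ℚ,
      E.Dred (i + (m : ℤ)) z = 0 ∧ ¬ E.redIsBd (i + (m : ℤ)) z := by
    intro m
    induction m with
    | zero =>
        rw [show i + ((0 : ℕ) : ℤ) = i by simp]
        exact ⟨w, hw0, hwb⟩
    | succ m ih =>
        have := red_step E hE hEa (i + (m : ℤ)) ih
        rw [show i + (m : ℤ) + 1 = i + ((m + 1 : ℕ) : ℤ) by push_cast; ring] at this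
        exact this
  obtain ⟨z, _, hzb⟩ := key (E.N + i.natAbs + 1)
  apply hzb
  have hemp : IsEmpty (E.B (i + ((E.N + i.natAbs + 1 : ℕ) : ℤ))) := by
    refine hE.2.2 _ ?_
    rw [Int.abs_eq_natAbs]
    omega
  refine ⟨0, ?_⟩
  funext b
  exact (hemp.false b).elim

end PCStuff
end StmtAux

namespace StmtAux
namespace PCStuff

variable {K : ℕ} {p : Fin K → ℕ × ℤ × ℤ}

lemma std_fst_d (i : ℤ) (b : (stdCn K p).B (i + 1)) (b' : (stdCn K p).B i) :
    ((stdCn K p).d i b b').fst = 0 := by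
  show (if b.1 = b'.1 then Aeps else 0).fst = 0
  split
  · exact fst_Aeps
  · exact TrivSqZeroExt.fst_zero

lemma std_cast_val {a b : ℤ} (pf2 : (stdCn K p).B a = (stdCn K p).B b) (h : a = b)
    (x : (stdCn K p).B a) : (cast pf2 x).1 = x.1 := by
  subst h; rfl

lemma std_Dredto_zero (i : ℤ) (u : (stdCn K p).B (i - 1) → ℚ) :
    (stdCn K p).Dredto i u = 0 := by
  funext b
  show (∑ m, ((stdCn K p).d (i - 1)
      (cast (congrArg (stdCn K p).B (by omega : i = i - 1 + 1)) b) m).fst * u m) = 0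
  refine Finset.sum_eq_zero fun m _ => ?_
  rw [std_fst_d, zero_mul]

lemma std_red_exists (k : Fin K) :
    (stdCn K p).redHNZ (p k).2.1 ((p k).2.2 - 1) := by
  refine ⟨fun b => if b.1 = k then 1 else 0, ?_, ?_, ?_⟩
  · intro b hb
    replace hb : (if b.1 = k then (1 : ℚ) else 0) ≠ 0 := hb
    have hbk : b.1 = k := by
      by_contra hne
      rw [if_neg hne] at hb
      exact hb rfl
    show (p b.1).2.2 - 2 * ((p k).2.1 - (p b.1).2.1) - 1 = (p k).2.2 - 1
    rw [hbk]
    ring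
  · funext b
    refine Finset.sum_eq_zero fun m _ => ?_
    rw [std_fst_d, zero_mul]
  · rintro ⟨u, hu⟩
    have hb0 : (p k).2.1 ≤ (p k).2.1 ∧ (p k).2.1 ≤ (p k).2.1 + (p k).1 := by omega
    have h1 := congrFun hu (⟨k, hb0⟩ : (stdCn K p).B ((p k).2.1))
    replace h1 : (stdCn K p).Dredto (p k).2.1 u ⟨k, hb0⟩
        = (if (k : Fin K) = k then (1 : ℚ) else 0) := h1
    have h0 : (stdCn K p).Dredto (p k).2.1 u ⟨k, hb0⟩ = 0 := by
      have := congrFun (std_Dredto_zero (K := K) (p := p) (p k).2.1 u) ⟨k, hb0⟩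
      exact this
    rw [if_pos rfl, h0] at h1
    exact one_ne_zero h1.symm

lemma std_red_diag (i j : ℤ) (h : (stdCn K p).redHNZ i j) :
    ∃ k, 2 * i + j = 2 * (p k).2.1 + (p k).2.2 - 1 := by
  obtain ⟨w, hwh, _, hwb⟩ := h
  have hw : ∃ b, w b ≠ 0 := by
    by_contra hc
    push_neg at hc
    exact hwb ((funext hc : w = 0) ▸ zero_redIsBd _ i)
  obtain ⟨b, hb⟩ := hw
  refine ⟨b.1, ?_⟩
  have hdeg : (p b.1).2.2 - 2 * (i - (p b.1).2.1) - 1 = j := hwh b hb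
  omega

lemma std_diag (i j : ℤ) (h : (stdCn K p).HNZ i j) :
    ∃ k, 2 * i + j = 2 * (p k).2.1 + (p k).2.2 - 1
      ∨ 2 * i + j = 2 * (p k).2.1 + (p k).2.2 + 1 := by
  obtain ⟨w, _, hwh, hwb⟩ := h
  have hw : ∃ b, w b ≠ 0 := by
    by_contra hc
    push_neg at hc
    exact hwb ((funext hc : w = 0) ▸ zero_isBd _ i)
  obtain ⟨b, hb⟩ := hw
  refine ⟨b.1, ?_⟩
  rcases Classical.em ((w b).fst = 0) with hf | hf
  · have hs : (w b).snd ≠ 0 := fun h0 => hb (TrivSqZeroExt.ext hf h0)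
    have hdeg : (p b.1).2.2 - 2 * (i - (p b.1).2.1) + 1 = j := (hwh b).2 hs
    right
    omega
  · have hdeg : (p b.1).2.2 - 2 * (i - (p b.1).2.1) - 1 = j := (hwh b).1 hf
    left
    omega

lemma std_hnz_top (k : Fin K) :
    (stdCn K p).HNZ (p k).2.1 ((p k).2.2 + 1) := by
  refine ⟨fun b => if b.1 = k then Aeps else 0, ?_, ?_, ?_⟩
  · funext b'
    refine Finset.sum_eq_zero fun b _ => ?_
    show (if b'.1 = b.1 then Aeps else 0) * (if b.1 = k then Aeps else 0) = 0
    split_ifs with h1 h2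
    · show Aeps * Aeps = 0
      exact DualNumber.eps_mul_eps
    · rw [mul_zero]
    · rw [zero_mul]
    · rw [zero_mul]
  · intro b
    constructor
    · intro hf
      replace hf : (if b.1 = k then Aeps else 0).fst ≠ 0 := hf
      exfalso
      rcases Classical.em (b.1 = k) with hbk | hbk
      · rw [if_pos hbk] at hf
        exact hf fst_Aeps
      · rw [if_neg hbk] at hf
        exact hf TrivSqZeroExt.fst_zero
    · intro hs
      replace hs : (if b.1 = k then Aeps else 0).snd ≠ 0 := hs
      have hbk : b.1 = k := by
        by_contra hne
        rw [if_neg hne] at hs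
        exact hs TrivSqZeroExt.snd_zero
      show (p b.1).2.2 - 2 * ((p k).2.1 - (p b.1).2.1) + 1 = (p k).2.2 + 1
      rw [hbk]
      ring
  · rintro ⟨u, hu⟩
    have hb0 : (p k).2.1 ≤ (p k).2.1 ∧ (p k).2.1 ≤ (p k).2.1 + (p k).1 := by omega
    have hL : (stdCn K p).Dto ((p k).2.1) u ⟨k, hb0⟩ = 0 := by
      show (∑ m, (stdCn K p).d ((p k).2.1 - 1)
          (cast (congrArg (stdCn K p).B
            (by omega : (p k).2.1 = (p k).2.1 - 1 + 1)) (⟨k, hb0⟩ : (stdCn K p).B ((p k).2.1))) m * u m) = 0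
      refine Finset.sum_eq_zero fun m _ => ?_
      have hne : ¬ ((cast (congrArg (stdCn K p).B
          (by omega : (p k).2.1 = (p k).2.1 - 1 + 1)) (⟨k, hb0⟩ : (stdCn K p).B ((p k).2.1))).1 = m.1) := by
        rw [std_cast_val (K := K) (p := p) _ (by omega : (p k).2.1 = (p k).2.1 - 1 + 1)
          (⟨k, hb0⟩ : (stdCn K p).B ((p k).2.1))]
        intro hh
        have h2 := m.2.1
        rw [← hh] at h2
        have h3 : (p k).2.1 ≤ (p k).2.1 - 1 := h2
        omega
      show (if _ = m.1 then Aeps else 0) * u m = 0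
      rw [if_neg hne, zero_mul]
    have h1 := congrFun hu (⟨k, hb0⟩ : (stdCn K p).B ((p k).2.1))
    replace h1 : (stdCn K p).Dto (p k).2.1 u ⟨k, hb0⟩
        = (if (k : Fin K) = k then Aeps else 0) := h1
    rw [if_pos rfl, hL] at h1
    exact Aeps_ne_zero h1.symm

lemma std_hnz_bot (k : Fin K) :
    (stdCn K p).HNZ ((p k).2.1 + (p k).1) ((p k).2.2 - 2 * (p k).1 - 1) := by
  refine ⟨fun b => if b.1 = k then 1 else 0, ?_, ?_, ?_⟩
  · funext b'
    refine Finset.sum_eq_zero fun b _ => ?_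
    show (if b'.1 = b.1 then Aeps else 0) * (if b.1 = k then 1 else 0) = 0
    rcases Classical.em (b.1 = k) with hb | hb
    · have hne : ¬ (b'.1 = b.1) := by
        intro hh
        have h2 := b'.2.2
        rw [hh, hb] at h2
        omega
      rw [if_neg hne, zero_mul]
    · rw [if_neg hb, mul_zero]
  · intro b
    constructor
    · intro hf
      replace hf : (if b.1 = k then (1 : A) else 0).fst ≠ 0 := hf
      have hbk : b.1 = k := by
        by_contra hne
        rw [if_neg hne] at hf
        exact hf TrivSqZeroExt.fst_zero
      show (p b.1).2.2 - 2 * ((p k).2.1 + (p k).1 - (p b.1).2.1) - 1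
          = (p k).2.2 - 2 * (p k).1 - 1
      rw [hbk]
      ring
    · intro hs
      replace hs : (if b.1 = k then (1 : A) else 0).snd ≠ 0 := hs
      exfalso
      rcases Classical.em (b.1 = k) with hbk | hbk
      · rw [if_pos hbk] at hs
        exact hs TrivSqZeroExt.snd_one
      · rw [if_neg hbk] at hs
        exact hs TrivSqZeroExt.snd_zero
  · rintro ⟨u, hu⟩
    have hb0 : (p k).2.1 ≤ (p k).2.1 + (p k).1 ∧ (p k).2.1 + (p k).1 ≤ (p k).2.1 + (p k).1 := by
      omega
    have h1 := congrArg TrivSqZeroExt.fst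
      (congrFun hu (⟨k, hb0⟩ : (stdCn K p).B ((p k).2.1 + (p k).1)))
    replace h1 : ((stdCn K p).Dto ((p k).2.1 + (p k).1) u ⟨k, hb0⟩).fst
        = (if (k : Fin K) = k then (1 : A) else 0).fst := h1
    have h0 : (stdCn K p).Dredto ((p k).2.1 + (p k).1) (fun y => (u y).fst) ⟨k, hb0⟩ = 0 := by
      have := congrFun (std_Dredto_zero (K := K) (p := p) ((p k).2.1 + (p k).1)
        (fun y => (u y).fst)) ⟨k, hb0⟩
      exact this
    rw [if_pos rfl, fst_Dto (stdCn K p) _ u ⟨k, hb0⟩, h0, TrivSqZeroExt.fst_one] at h1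
    exact one_ne_zero h1.symm

end PCStuff
end StmtAux
end

/-- For a complex which decomposes, modulo an acyclic summand, into shifted copies
of the `C_n`: the reduced cohomology lies on a single diagonal `2i + j = const`
iff the (unreduced) cohomology lies on two adjacent diagonals. -/
theorem stmt12 (C : PC) (K : ℕ) (hK : 1 ≤ K) (p : Fin K → ℕ × ℤ × ℤ) (E : PC)
    (hC : C.IsComplex) (hE : E.IsComplex) (hEa : E.Acyclic)
    (hiso : Nonempty (PCIso C ((stdCn K p).dsum E))) :
    (∃ b₀ : ℤ, ∀ i j : ℤ, C.redHNZ i j → 2 * i + j = b₀) ↔ C.widthLE 2 := by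
  classical
  obtain ⟨e⟩ := hiso
  have hCS : ∀ i j : ℤ, C.HNZ i j → (stdCn K p).HNZ i j ∨ E.HNZ i j := by
    intro i j h
    obtain ⟨t, rfl⟩ : ∃ t, i = t + 1 := ⟨i - 1, by omega⟩
    exact StmtAux.PCStuff.dsum_hnz_cases t j (StmtAux.PCStuff.hnz_transfer e t j h)
  have hSC : ∀ i j : ℤ, (stdCn K p).HNZ i j → C.HNZ i j := by
    intro i j h
    obtain ⟨t, rfl⟩ : ∃ t, i = t + 1 := ⟨i - 1, by omega⟩
    exact StmtAux.PCStuff.hnz_transfer (StmtAux.PCStuff.isoSymm e) t j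
      (StmtAux.PCStuff.dsum_hnz_left t j h)
  have hCSr : ∀ i j : ℤ, C.redHNZ i j → (stdCn K p).redHNZ i j := by
    intro i j h
    obtain ⟨t, rfl⟩ : ∃ t, i = t + 1 := ⟨i - 1, by omega⟩
    rcases StmtAux.PCStuff.dsum_red_cases t j (StmtAux.PCStuff.red_hnz_transfer e t j h)
      with h' | h'
    · exact h'
    · exact absurd h' (StmtAux.PCStuff.acyclic_red_false E hE hEa _ _)
  have hSCr : ∀ i j : ℤ, (stdCn K p).redHNZ i j → C.redHNZ i j := by
    intro i j h
    obtain ⟨t, rfl⟩ : ∃ t, i = t + 1 := ⟨i - 1, by omega⟩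
    exact StmtAux.PCStuff.red_hnz_transfer (StmtAux.PCStuff.isoSymm e) t j
      (StmtAux.PCStuff.dsum_red_left t j h)
  constructor
  · rintro ⟨b₀, hb⟩
    have hs : ∀ k, 2 * (p k).2.1 + (p k).2.2 - 1 = b₀ := by
      intro k
      have h1 := hb (p k).2.1 ((p k).2.2 - 1) (hSCr _ _ (StmtAux.PCStuff.std_red_exists k))
      omega
    refine ⟨b₀, fun i j h => ?_⟩
    rcases hCS i j h with h' | h'
    · obtain ⟨k, hk | hk⟩ := StmtAux.PCStuff.std_diag i j h'
      · have := hs k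
        refine ⟨by omega, by push_cast; omega⟩
      · have := hs k
        refine ⟨by omega, by push_cast; omega⟩
    · exact absurd h' (StmtAux.PCStuff.acyclic_hnz_false E hEa i j)
  · rintro ⟨b₀, hb⟩
    have hs : ∀ k, 2 * (p k).2.1 + (p k).2.2 - 1 = b₀ := by
      intro k
      have h1 := hb ((p k).2.1) ((p k).2.2 + 1) (hSC _ _ (StmtAux.PCStuff.std_hnz_top k))
      have h2 := hb ((p k).2.1 + (p k).1) ((p k).2.2 - 2 * (p k).1 - 1)
        (hSC _ _ (StmtAux.PCStuff.std_hnz_bot k))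
      push_cast at h1 h2
      omega
    refine ⟨b₀, fun i j h => ?_⟩
    obtain ⟨k, hk⟩ := StmtAux.PCStuff.std_red_diag i j (hCSr i j h)
    have := hs k
    omega
end

section
/- Over A = ℚ[X]/(X²), the tensor product C_1 ⊗_A C_1 of the complex 0 → A →^X A{-2} → 0 with itself decomposes as a direct sum of C_2 (the complex 0 → A →^X A{-2} →^X A{-4} → 0) and a complex isomorphic to C_0 shifted, or alternatively as a direct sum of shifted copies of C_1 and an acyclic complex; in particular its total cohomology has dimension 4 over ℚ. -/
noncomputable section
open Classical

namespace StmtAux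

instance (s : ℤ) : Subsingleton ((Cn 1).B s) :=
  ⟨fun a b => Subtype.ext (Fin.ext (by have := a.1.isLt; have := b.1.isLt; omega))⟩

instance {α β : Type} [Subsingleton α] [Subsingleton β] : Subsingleton (α × β) :=
  ⟨fun a b => Prod.ext (Subsingleton.elim _ _) (Subsingleton.elim _ _)⟩

abbrev T : PC := (Cn 1).tensor (Cn 1)

def E0 : T.B 0 := ⟨⟨0, by decide⟩, ⟨0, by decide⟩, ⟨0, by decide⟩⟩
def P : T.B 1 := ⟨⟨0, by decide⟩, ⟨0, by decide⟩, ⟨0, by decide⟩⟩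
def Q : T.B 1 := ⟨⟨1, by decide⟩, ⟨0, by decide⟩, ⟨0, by decide⟩⟩
def F : T.B 2 := ⟨⟨1, by decide⟩, ⟨0, by decide⟩, ⟨0, by decide⟩⟩

lemma E0val : ((E0.1 : ℤ)) = 0 := rfl
lemma Pval : ((P.1 : ℤ)) = 0 := rfl
lemma Qval : ((Q.1 : ℤ)) = 1 := rfl
lemma Fval : ((F.1 : ℤ)) = 1 := rfl

lemma sigEqT {i : ℤ} (a b : T.B i) (h : (a.1 : ℤ) = (b.1 : ℤ)) : a = b :=
  Sigma.ext (Subtype.ext h) (Subsingleton.helim (by rw [h]) _ _)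

lemma memT {i : ℤ} (b : T.B i) :
    (0 : ℤ) ≤ (b.1 : ℤ) ∧ (b.1 : ℤ) ≤ 1 ∧ 0 ≤ i - (b.1 : ℤ) ∧ i - (b.1 : ℤ) ≤ 1 := by
  have h1 : (0 : ℤ) ≤ (b.1 : ℤ) ∧ (b.1 : ℤ) ≤ 0 + 1 := b.2.1.2
  have h2 : (0 : ℤ) ≤ i - (b.1 : ℤ) ∧ i - (b.1 : ℤ) ≤ 0 + 1 := b.2.2.2
  omega

lemma isEmptyT {i : ℤ} (h : i < 0 ∨ 2 < i) : IsEmpty (T.B i) :=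
  ⟨fun b => by have := memT b; omega⟩

lemma PneQ : P ≠ Q := fun h => by
  have h2 : (0 : ℤ) = 1 := congrArg (fun b : T.B 1 => (b.1 : ℤ)) h
  norm_num at h2

lemma univT0 : (Finset.univ : Finset (T.B 0)) = {E0} := by
  ext b
  simp only [Finset.mem_univ, Finset.mem_singleton, true_iff]
  exact sigEqT b E0 (by have := memT b; rw [E0val]; omega)

lemma univT1 : (Finset.univ : Finset (T.B 1)) = {P, Q} := by
  ext b
  simp only [Finset.mem_univ, Finset.mem_insert, Finset.mem_singleton, true_iff]
  have hb := memT b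
  rcases (show (b.1 : ℤ) = 0 ∨ (b.1 : ℤ) = 1 by omega) with h | h
  · exact Or.inl (sigEqT b P (by rw [Pval, h]))
  · exact Or.inr (sigEqT b Q (by rw [Qval, h]))

lemma univT2 : (Finset.univ : Finset (T.B 2)) = {F} := by
  ext b
  simp only [Finset.mem_univ, Finset.mem_singleton, true_iff]
  exact sigEqT b F (by have := memT b; rw [Fval]; omega)

lemma sumT0 {M : Type} [AddCommMonoid M] (f : T.B 0 → M) : ∑ b, f b = f E0 := by
  rw [univT0, Finset.sum_singleton]

lemma sumT1 {M : Type} [AddCommMonoid M] (f : T.B 1 → M) : ∑ b, f b = f P + f Q := by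
  rw [univT1, Finset.sum_insert (Finset.notMem_singleton.2 PneQ), Finset.sum_singleton]

lemma sumT2 {M : Type} [AddCommMonoid M] (f : T.B 2 → M) : ∑ b, f b = f F := by
  rw [univT2, Finset.sum_singleton]

lemma Td0PE0 : T.d 0 P E0 = Aeps := by
  simp [T, PC.tensor, P, E0, Cn, stdCn, eq_iff_true_of_subsingleton]
lemma Td0QE0 : T.d 0 Q E0 = Aeps := by
  simp [T, PC.tensor, Q, E0, Cn, stdCn, eq_iff_true_of_subsingleton]
lemma Td1FP : T.d 1 F P = Aeps := by
  simp [T, PC.tensor, F, P, Cn, stdCn, eq_iff_true_of_subsingleton]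
lemma Td1FQ : T.d 1 F Q = -Aeps := by
  simp [T, PC.tensor, F, Q, Cn, stdCn, eq_iff_true_of_subsingleton]

lemma degT (i : ℤ) (b : T.B i) : T.deg i b = -2 * i := by
  show (0 - 2 * ((b.1 : ℤ) - 0)) + (0 - 2 * ((i - (b.1 : ℤ)) - 0)) = -2 * i
  ring

def pvec : Fin 2 → ℕ × ℤ × ℤ := ![(1, 0, 0), (1, 1, -2)]

def Etriv : PC := stdCn 0 (fun k => k.elim0)

abbrev S : PC := (stdCn 2 pvec).dsum Etriv

def s0 : S.B 0 := Sum.inl ⟨0, by decide⟩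
def s1 : S.B 1 := Sum.inl ⟨0, by decide⟩
def s1' : S.B 1 := Sum.inl ⟨1, by decide⟩
def s2 : S.B 2 := Sum.inl ⟨1, by decide⟩

lemma memS {i : ℤ} (b : (stdCn 2 pvec).B i) :
    ((b.1 : ℕ) = 0 ∧ 0 ≤ i ∧ i ≤ 1) ∨ ((b.1 : ℕ) = 1 ∧ 1 ≤ i ∧ i ≤ 2) := by
  obtain ⟨⟨kv, hkv⟩, hw⟩ := b
  rcases (show kv = 0 ∨ kv = 1 by omega) with rfl | rfl
  · have h : (0 : ℤ) ≤ i ∧ i ≤ 0 + 1 := hw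
    exact Or.inl ⟨rfl, by omega⟩
  · have h : (1 : ℤ) ≤ i ∧ i ≤ 1 + 1 := hw
    exact Or.inr ⟨rfl, by omega⟩

lemma sigEqS {i : ℤ} (a b : (stdCn 2 pvec).B i) (h : (a.1 : ℕ) = (b.1 : ℕ)) :
    Sum.inl a = (Sum.inl b : S.B i) :=
  congrArg Sum.inl (Subtype.ext (Fin.ext h))

lemma univS0 : (Finset.univ : Finset (S.B 0)) = {s0} := by
  ext b
  simp only [Finset.mem_univ, Finset.mem_singleton, true_iff]
  rcases b with a | e
  · rcases memS a with ⟨h0, _⟩ | ⟨_, hi, _⟩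
    · exact sigEqS a _ h0
    · omega
  · exact e.1.elim0

lemma s1nes1' : s1 ≠ s1' := by
  intro h
  have h2 : ((0 : Fin 2) : ℕ) = ((1 : Fin 2) : ℕ) := by
    have := congrArg (fun x : S.B 1 => Sum.elim (fun a => (a.1 : ℕ)) (fun _ => 0) x) h
    exact this
  norm_num at h2

lemma univS1 : (Finset.univ : Finset (S.B 1)) = {s1, s1'} := by
  ext b
  simp only [Finset.mem_univ, Finset.mem_insert, Finset.mem_singleton, true_iff]
  rcases b with a | e
  · rcases memS a with ⟨h0, _⟩ | ⟨h1, _⟩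
    · exact Or.inl (sigEqS a _ h0)
    · exact Or.inr (sigEqS a _ h1)
  · exact e.1.elim0

lemma univS2 : (Finset.univ : Finset (S.B 2)) = {s2} := by
  ext b
  simp only [Finset.mem_univ, Finset.mem_singleton, true_iff]
  rcases b with a | e
  · rcases memS a with ⟨_, _, hi⟩ | ⟨h1, _⟩
    · omega
    · exact sigEqS a _ h1
  · exact e.1.elim0

lemma sumS0 {M : Type} [AddCommMonoid M] (f : S.B 0 → M) : ∑ b, f b = f s0 := by
  rw [univS0, Finset.sum_singleton]

lemma sumS1 {M : Type} [AddCommMonoid M] (f : S.B 1 → M) : ∑ b, f b = f s1 + f s1' := by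
  rw [univS1, Finset.sum_insert (Finset.notMem_singleton.2 s1nes1'), Finset.sum_singleton]

lemma sumS2 {M : Type} [AddCommMonoid M] (f : S.B 2 → M) : ∑ b, f b = f s2 := by
  rw [univS2, Finset.sum_singleton]

lemma Sd0s1s0 : S.d 0 s1 s0 = Aeps := by simp [S, PC.dsum, stdCn, s1, s0]
lemma Sd0s1's0 : S.d 0 s1' s0 = 0 := by simp [S, PC.dsum, stdCn, s1', s0]
lemma Sd1s2s1 : S.d 1 s2 s1 = 0 := by simp [S, PC.dsum, stdCn, s2, s1]
lemma Sd1s2s1' : S.d 1 s2 s1' = Aeps := by simp [S, PC.dsum, stdCn, s2, s1']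

lemma degS (i : ℤ) (a : (stdCn 2 pvec).B i) : (stdCn 2 pvec).deg i a = -2 * i := by
  obtain ⟨⟨kv, hkv⟩, hw⟩ := a
  rcases (show kv = 0 ∨ kv = 1 by omega) with rfl | rfl
  · show (0 : ℤ) - 2 * (i - 0) = -2 * i
    ring
  · show (-2 : ℤ) - 2 * (i - 1) = -2 * i
    ring

def fmat : ∀ i, S.B i → T.B i → A := fun i b b' =>
  match b with
  | Sum.inl k =>
      if (k.1 : ℕ) = 0 then (if i = 1 ∧ (b'.1 : ℤ) = 0 then 0 else 1)
      else (if i = 1 ∧ (b'.1 : ℤ) = 1 then -1 else 1)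
  | Sum.inr _ => 0

def gmat : ∀ i, T.B i → S.B i → A := fun i b b' =>
  match b' with
  | Sum.inl k =>
      if (k.1 : ℕ) = 0 then 1
      else (if i = 1 ∧ (b.1 : ℤ) = 1 then 0 else 1)
  | Sum.inr _ => 0

lemma f_s0_E0 : fmat 0 s0 E0 = 1 := by norm_num [fmat, s0, E0]
lemma f_s1_P : fmat 1 s1 P = 0 := by norm_num [fmat, s1, P]
lemma f_s1_Q : fmat 1 s1 Q = 1 := by norm_num [fmat, s1, Q]
lemma f_s1'_P : fmat 1 s1' P = 1 := by norm_num [fmat, s1', P]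
lemma f_s1'_Q : fmat 1 s1' Q = -1 := by norm_num [fmat, s1', Q]
lemma f_s2_F : fmat 2 s2 F = 1 := by norm_num [fmat, s2, F]

lemma g_E0_s0 : gmat 0 E0 s0 = 1 := by norm_num [gmat, s0, E0]
lemma g_P_s1 : gmat 1 P s1 = 1 := by norm_num [gmat, s1, P]
lemma g_Q_s1 : gmat 1 Q s1 = 1 := by norm_num [gmat, s1, Q]
lemma g_P_s1' : gmat 1 P s1' = 1 := by norm_num [gmat, s1', P]
lemma g_Q_s1' : gmat 1 Q s1' = 0 := by norm_num [gmat, s1', Q]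
lemma g_F_s2 : gmat 2 F s2 = 1 := by norm_num [gmat, s2, F]

lemma fc0s1 : ∑ m, fmat 1 s1 m * T.d 0 m E0 = ∑ m, S.d 0 s1 m * fmat 0 m E0 := by
  rw [sumT1, sumS0, f_s1_P, f_s1_Q, Td0PE0, Td0QE0, Sd0s1s0, f_s0_E0]; ring
lemma fc0s1' : ∑ m, fmat 1 s1' m * T.d 0 m E0 = ∑ m, S.d 0 s1' m * fmat 0 m E0 := by
  rw [sumT1, sumS0, f_s1'_P, f_s1'_Q, Td0PE0, Td0QE0, Sd0s1's0, f_s0_E0]; ring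
lemma fc1P : ∑ m, fmat 2 s2 m * T.d 1 m P = ∑ m, S.d 1 s2 m * fmat 1 m P := by
  rw [sumT2, sumS1, f_s2_F, Td1FP, Sd1s2s1, Sd1s2s1', f_s1_P, f_s1'_P]; ring
lemma fc1Q : ∑ m, fmat 2 s2 m * T.d 1 m Q = ∑ m, S.d 1 s2 m * fmat 1 m Q := by
  rw [sumT2, sumS1, f_s2_F, Td1FQ, Sd1s2s1, Sd1s2s1', f_s1_Q, f_s1'_Q]; ring

lemma gc0P : ∑ m, gmat 1 P m * S.d 0 m s0 = ∑ m, T.d 0 P m * gmat 0 m s0 := by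
  rw [sumS1, sumT0, g_P_s1, g_P_s1', Sd0s1s0, Sd0s1's0, Td0PE0, g_E0_s0]; ring
lemma gc0Q : ∑ m, gmat 1 Q m * S.d 0 m s0 = ∑ m, T.d 0 Q m * gmat 0 m s0 := by
  rw [sumS1, sumT0, g_Q_s1, g_Q_s1', Sd0s1s0, Sd0s1's0, Td0QE0, g_E0_s0]; ring
lemma gc1s1 : ∑ m, gmat 2 F m * S.d 1 m s1 = ∑ m, T.d 1 F m * gmat 1 m s1 := by
  rw [sumS2, sumT1, g_F_s2, Sd1s2s1, Td1FP, Td1FQ, g_P_s1, g_Q_s1]; ring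
lemma gc1s1' : ∑ m, gmat 2 F m * S.d 1 m s1' = ∑ m, T.d 1 F m * gmat 1 m s1' := by
  rw [sumS2, sumT1, g_F_s2, Sd1s2s1', Td1FP, Td1FQ, g_P_s1', g_Q_s1']; ring

lemma li00 : ∑ m, gmat 0 E0 m * fmat 0 m E0 = if E0 = E0 then (1 : A) else 0 := by
  rw [sumS0, g_E0_s0, f_s0_E0, if_pos rfl]; ring
lemma liPP : ∑ m, gmat 1 P m * fmat 1 m P = if P = P then (1 : A) else 0 := by
  rw [sumS1, g_P_s1, g_P_s1', f_s1_P, f_s1'_P, if_pos rfl]; ring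
lemma liPQ : ∑ m, gmat 1 P m * fmat 1 m Q = if P = Q then (1 : A) else 0 := by
  rw [sumS1, g_P_s1, g_P_s1', f_s1_Q, f_s1'_Q, if_neg PneQ]; ring
lemma liQP : ∑ m, gmat 1 Q m * fmat 1 m P = if Q = P then (1 : A) else 0 := by
  rw [sumS1, g_Q_s1, g_Q_s1', f_s1_P, f_s1'_P, if_neg (fun h => PneQ h.symm)]; ring
lemma liQQ : ∑ m, gmat 1 Q m * fmat 1 m Q = if Q = Q then (1 : A) else 0 := by
  rw [sumS1, g_Q_s1, g_Q_s1', f_s1_Q, f_s1'_Q, if_pos rfl]; ring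
lemma liFF : ∑ m, gmat 2 F m * fmat 2 m F = if F = F then (1 : A) else 0 := by
  rw [sumS2, g_F_s2, f_s2_F, if_pos rfl]; ring

lemma ri00 : ∑ m, fmat 0 s0 m * gmat 0 m s0 = if s0 = s0 then (1 : A) else 0 := by
  rw [sumT0, g_E0_s0, f_s0_E0, if_pos rfl]; ring
lemma ri11 : ∑ m, fmat 1 s1 m * gmat 1 m s1 = if s1 = s1 then (1 : A) else 0 := by
  rw [sumT1, g_P_s1, g_Q_s1, f_s1_P, f_s1_Q, if_pos rfl]; ring
lemma ri11' : ∑ m, fmat 1 s1 m * gmat 1 m s1' = if s1 = s1' then (1 : A) else 0 := by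
  rw [sumT1, g_P_s1', g_Q_s1', f_s1_P, f_s1_Q, if_neg s1nes1']; ring
lemma ri1'1 : ∑ m, fmat 1 s1' m * gmat 1 m s1 = if s1' = s1 then (1 : A) else 0 := by
  rw [sumT1, g_P_s1, g_Q_s1, f_s1'_P, f_s1'_Q, if_neg (fun h => s1nes1' h.symm)]; ring
lemma ri1'1' : ∑ m, fmat 1 s1' m * gmat 1 m s1' = if s1' = s1' then (1 : A) else 0 := by
  rw [sumT1, g_P_s1', g_Q_s1', f_s1'_P, f_s1'_Q, if_pos rfl]; ring
lemma ri22 : ∑ m, fmat 2 s2 m * gmat 2 m s2 = if s2 = s2 then (1 : A) else 0 := by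
  rw [sumT2, g_F_s2, f_s2_F, if_pos rfl]; ring

def theIso : PCIso T S where
  f := fmat
  g := gmat
  f_homog := by
    intro i b b'
    rcases b with a | e
    · refine ⟨fun _ => (degS i a).trans (degT i b').symm, fun h => absurd ?_ h⟩
      show (fmat i (Sum.inl a) b').snd = 0
      simp only [fmat]
      split_ifs <;> simp
    · exact e.1.elim0
  g_homog := by
    intro i b b'
    rcases b' with a | e
    · refine ⟨fun _ => (degT i b).trans (degS i a).symm, fun h => absurd ?_ h⟩
      show (gmat i b (Sum.inl a)).snd = 0
      simp only [gmat]
      split_ifs <;> simp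
    · exact e.1.elim0
  f_chain := by
    intro i b b'
    have hb' := memT b'
    rcases b with a | e
    · rcases memS a with ⟨h0, hi⟩ | ⟨h1, hi⟩
      · obtain rfl : i = 0 := by omega
        obtain rfl : b' = E0 := sigEqT b' E0 (by rw [E0val]; omega)
        rw [show (Sum.inl a : S.B (0 + 1)) = s1 from sigEqS a _ h0]
        exact fc0s1
      · rcases (show i = 0 ∨ i = 1 by omega) with rfl | rfl
        · obtain rfl : b' = E0 := sigEqT b' E0 (by rw [E0val]; omega)
          rw [show (Sum.inl a : S.B (0 + 1)) = s1' from sigEqS a _ h1]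
          exact fc0s1'
        · rw [show (Sum.inl a : S.B (1 + 1)) = s2 from sigEqS a _ h1]
          rcases (show (b'.1 : ℤ) = 0 ∨ (b'.1 : ℤ) = 1 by omega) with h | h
          · obtain rfl : b' = P := sigEqT b' P (by rw [Pval, h])
            exact fc1P
          · obtain rfl : b' = Q := sigEqT b' Q (by rw [Qval, h])
            exact fc1Q
    · exact e.1.elim0
  g_chain := by
    intro i b b'
    have hb := memT b
    rcases b' with a | e
    · rcases memS a with ⟨h0, hi⟩ | ⟨h1, hi⟩
      · rcases (show i = 0 ∨ i = 1 by omega) with rfl | rfl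
        · rw [show (Sum.inl a : S.B 0) = s0 from sigEqS a _ h0]
          rcases (show (b.1 : ℤ) = 0 ∨ (b.1 : ℤ) = 1 by omega) with h | h
          · obtain rfl : b = P := sigEqT b P (by rw [Pval, h])
            exact gc0P
          · obtain rfl : b = Q := sigEqT b Q (by rw [Qval, h])
            exact gc0Q
        · rw [show (Sum.inl a : S.B 1) = s1 from sigEqS a _ h0]
          obtain rfl : b = F := sigEqT b F (by rw [Fval]; omega)
          exact gc1s1
      · obtain rfl : i = 1 := by omega
        rw [show (Sum.inl a : S.B 1) = s1' from sigEqS a _ h1]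
        obtain rfl : b = F := sigEqT b F (by rw [Fval]; omega)
        exact gc1s1'
    · exact e.1.elim0
  left_inv := by
    intro i b b'
    have hb := memT b
    have hb' := memT b'
    rcases (show i = 0 ∨ i = 1 ∨ i = 2 by omega) with rfl | rfl | rfl
    · obtain rfl : b = E0 := sigEqT b E0 (by rw [E0val]; omega)
      obtain rfl : b' = E0 := sigEqT b' E0 (by rw [E0val]; omega)
      exact li00
    · rcases (show (b.1 : ℤ) = 0 ∨ (b.1 : ℤ) = 1 by omega) with h | h <;>
        rcases (show (b'.1 : ℤ) = 0 ∨ (b'.1 : ℤ) = 1 by omega) with h' | h'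
      · obtain rfl : b = P := sigEqT b P (by rw [Pval, h])
        obtain rfl : b' = P := sigEqT b' P (by rw [Pval, h'])
        exact liPP
      · obtain rfl : b = P := sigEqT b P (by rw [Pval, h])
        obtain rfl : b' = Q := sigEqT b' Q (by rw [Qval, h'])
        exact liPQ
      · obtain rfl : b = Q := sigEqT b Q (by rw [Qval, h])
        obtain rfl : b' = P := sigEqT b' P (by rw [Pval, h'])
        exact liQP
      · obtain rfl : b = Q := sigEqT b Q (by rw [Qval, h])
        obtain rfl : b' = Q := sigEqT b' Q (by rw [Qval, h'])
        exact liQQ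
    · obtain rfl : b = F := sigEqT b F (by rw [Fval]; omega)
      obtain rfl : b' = F := sigEqT b' F (by rw [Fval]; omega)
      exact liFF
  right_inv := by
    intro i b b'
    rcases b with a | e
    · rcases b' with a' | e'
      · rcases memS a with ⟨h0, hi⟩ | ⟨h1, hi⟩ <;>
          rcases memS a' with ⟨h0', hi'⟩ | ⟨h1', hi'⟩
        · rcases (show i = 0 ∨ i = 1 by omega) with rfl | rfl
          · rw [show (Sum.inl a : S.B 0) = s0 from sigEqS a _ h0,
              show (Sum.inl a' : S.B 0) = s0 from sigEqS a' _ h0']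
            exact ri00
          · rw [show (Sum.inl a : S.B 1) = s1 from sigEqS a _ h0,
              show (Sum.inl a' : S.B 1) = s1 from sigEqS a' _ h0']
            exact ri11
        · obtain rfl : i = 1 := by omega
          rw [show (Sum.inl a : S.B 1) = s1 from sigEqS a _ h0,
            show (Sum.inl a' : S.B 1) = s1' from sigEqS a' _ h1']
          exact ri11'
        · obtain rfl : i = 1 := by omega
          rw [show (Sum.inl a : S.B 1) = s1' from sigEqS a _ h1,
            show (Sum.inl a' : S.B 1) = s1 from sigEqS a' _ h0']
          exact ri1'1
        · rcases (show i = 1 ∨ i = 2 by omega) with rfl | rfl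
          · rw [show (Sum.inl a : S.B 1) = s1' from sigEqS a _ h1,
              show (Sum.inl a' : S.B 1) = s1' from sigEqS a' _ h1']
            exact ri1'1'
          · rw [show (Sum.inl a : S.B 2) = s2 from sigEqS a _ h1,
              show (Sum.inl a' : S.B 2) = s2 from sigEqS a' _ h1']
            exact ri22
      · exact e'.1.elim0
    · exact e.1.elim0

lemma pv1 : ∀ k, (pvec k).1 = 1 := by intro k; fin_cases k <;> rfl

lemma EtrivComplex : Etriv.IsComplex :=
  ⟨fun _ b _ => b.1.elim0, fun _ b _ => b.1.elim0, fun i _ => ⟨fun b => b.1.elim0⟩⟩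

lemma EtrivAcyclic : Etriv.Acyclic := fun _ w _ =>
  ⟨fun _ => 0, funext fun b => b.1.elim0⟩

def eA : A ≃ₗ[ℚ] (ℚ × ℚ) :=
  { toFun := fun x => x, invFun := fun x => x,
    map_add' := fun _ _ => rfl, map_smul' := fun _ _ => rfl,
    left_inv := fun _ => rfl, right_inv := fun _ => rfl }

instance : FiniteDimensional ℚ A := Module.Finite.equiv eA.symm

lemma frA : Module.finrank ℚ A = 2 := by
  rw [eA.finrank_eq, Module.finrank_prod, Module.finrank_self]

lemma cardT0 : Fintype.card (T.B 0) = 1 := by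
  show Finset.univ.card = 1
  rw [univT0, Finset.card_singleton]

lemma cardT1 : Fintype.card (T.B 1) = 2 := by
  show Finset.univ.card = 2
  rw [univT1, Finset.card_insert_of_notMem (Finset.notMem_singleton.2 PneQ),
    Finset.card_singleton]

lemma cardT2 : Fintype.card (T.B 2) = 1 := by
  show Finset.univ.card = 1
  rw [univT2, Finset.card_singleton]

lemma frspace (i : ℤ) : Module.finrank ℚ (T.B i → A) = Fintype.card (T.B i) * 2 := by
  rw [Module.finrank_pi_fintype ℚ, Finset.sum_congr rfl (fun x _ => frA),
    Finset.sum_const, Finset.card_univ, smul_eq_mul]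

lemma subsingletonFun {i : ℤ} (h : IsEmpty (T.B i)) : Subsingleton (T.B i → A) :=
  ⟨fun f g => funext fun x => (h.false x).elim⟩

lemma dimzero {i : ℤ} (h : IsEmpty (T.B i)) : T.dimH i = 0 := by
  haveI := subsingletonFun h
  haveI : Subsingleton (LinearMap.ker (T.DLin i)) :=
    ⟨fun a b => Subtype.ext (Subsingleton.elim _ _)⟩
  unfold PC.dimH
  rw [Module.finrank_zero_of_subsingleton]
  simp

lemma rangezero {i : ℤ} (h : IsEmpty (T.B i)) :
    Module.finrank ℚ (LinearMap.range (T.DLin i)) = 0 := by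
  haveI := subsingletonFun h
  have h0 : T.DLin i = 0 := LinearMap.ext fun v => by
    rw [Subsingleton.elim v 0, map_zero]; rfl
  rw [h0, LinearMap.range_zero, finrank_bot]

lemma epsmul (x : A) : Aeps * x = x.fst • Aeps := by
  ext
  · simp [Aeps]
  · simp [Aeps]

lemma epsne : Aeps ≠ 0 := by
  intro h
  have := congrArg TrivSqZeroExt.snd h
  simp [Aeps] at this

def vE : T.B 1 → A := fun _ => Aeps
def vF : T.B 2 → A := fun _ => Aeps

lemma vEne : vE ≠ 0 := fun h => epsne (congrFun h P)
lemma vFne : vF ≠ 0 := fun h => epsne (congrFun h F)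

lemma DLin0apply (v : T.B 0 → A) (b : T.B 1) : T.DLin 0 v b = Aeps * v E0 := by
  show ∑ b', T.d 0 b b' * v b' = Aeps * v E0
  rw [sumT0]
  have hb := memT b
  rcases (show (b.1 : ℤ) = 0 ∨ (b.1 : ℤ) = 1 by omega) with h | h
  · obtain rfl : b = P := sigEqT b P (by rw [Pval, h])
    rw [Td0PE0]
  · obtain rfl : b = Q := sigEqT b Q (by rw [Qval, h])
    rw [Td0QE0]

lemma DLin1apply (v : T.B 1 → A) (b : T.B 2) :
    T.DLin 1 v b = Aeps * v P + (-Aeps) * v Q := by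
  show ∑ b', T.d 1 b b' * v b' = _
  rw [sumT1]
  obtain rfl : b = F := sigEqT b F (by have := memT b; rw [Fval]; omega)
  rw [Td1FP, Td1FQ]

lemma rangeD0 : LinearMap.range (T.DLin 0) = Submodule.span ℚ {vE} := by
  apply le_antisymm
  · rintro w ⟨v, rfl⟩
    refine Submodule.mem_span_singleton.2 ⟨(v E0).fst, funext fun b => ?_⟩
    rw [Pi.smul_apply, DLin0apply, epsmul]
    rfl
  · rw [Submodule.span_le, Set.singleton_subset_iff]
    refine ⟨fun _ => 1, funext fun b => ?_⟩
    rw [DLin0apply, mul_one]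
    rfl
lemma rangeD1 : LinearMap.range (T.DLin 1) = Submodule.span ℚ {vF} := by
  apply le_antisymm
  · rintro w ⟨v, rfl⟩
    refine Submodule.mem_span_singleton.2 ⟨(v P).fst - (v Q).fst, funext fun b => ?_⟩
    rw [Pi.smul_apply, DLin1apply, neg_mul, epsmul (v P), epsmul (v Q),
      ← sub_eq_add_neg, ← sub_smul]
    rfl
  · rw [Submodule.span_le, Set.singleton_subset_iff]
    refine ⟨fun b => if (b.1 : ℤ) = 0 then 1 else 0, funext fun b => ?_⟩
    rw [DLin1apply]
    rw [show (if ((P.1 : ℤ)) = 0 then (1:A) else 0) = 1 from if_pos Pval]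
    rw [show (if ((Q.1 : ℤ)) = 0 then (1:A) else 0) = 0 from if_neg (by rw [Qval]; norm_num)]
    show Aeps * 1 + -Aeps * 0 = vF b
    rw [mul_one, mul_zero, add_zero]
    rfl

lemma frange0 : Module.finrank ℚ (LinearMap.range (T.DLin 0)) = 1 := by
  rw [rangeD0]
  exact finrank_span_singleton vEne

lemma frange1 : Module.finrank ℚ (LinearMap.range (T.DLin 1)) = 1 := by
  rw [rangeD1]
  exact finrank_span_singleton vFne

lemma fker0 : Module.finrank ℚ (LinearMap.ker (T.DLin 0)) = 1 := by
  have h := LinearMap.finrank_range_add_finrank_ker (T.DLin 0)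
  rw [frange0, frspace 0, cardT0] at h
  omega

lemma fker1 : Module.finrank ℚ (LinearMap.ker (T.DLin 1)) = 3 := by
  have h := LinearMap.finrank_range_add_finrank_ker (T.DLin 1)
  rw [frange1, frspace 1, cardT1] at h
  omega

lemma fker2 : Module.finrank ℚ (LinearMap.ker (T.DLin 2)) = 2 := by
  haveI : Subsingleton (T.B (2 + 1) → A) := subsingletonFun (isEmptyT (by norm_num))
  have h0 : T.DLin 2 = 0 := LinearMap.ext fun v => Subsingleton.elim _ _
  rw [h0, LinearMap.ker_zero, finrank_top, frspace 2, cardT2]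

lemma dimH0 : T.dimH 0 = 1 := by
  unfold PC.dimH
  rw [fker0, show Module.finrank ℚ (LinearMap.range (T.DtoLin 0)) =
    Module.finrank ℚ (LinearMap.range (T.DLin (-1))) from rfl,
    rangezero (isEmptyT (by norm_num))]

lemma dimH1 : T.dimH 1 = 2 := by
  unfold PC.dimH
  rw [fker1, show Module.finrank ℚ (LinearMap.range (T.DtoLin 1)) =
    Module.finrank ℚ (LinearMap.range (T.DLin 0)) from rfl, frange0]

lemma dimH2 : T.dimH 2 = 1 := by
  unfold PC.dimH
  rw [fker2, show Module.finrank ℚ (LinearMap.range (T.DtoLin 2)) =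
    Module.finrank ℚ (LinearMap.range (T.DLin 1)) from rfl, frange1]

lemma totalH4 : T.totalH = 4 := by
  have hN : T.N = 2 := by decide
  unfold PC.totalH
  rw [hN]
  rw [show Finset.Icc (-((2:ℕ):ℤ) - 1) (((2:ℕ):ℤ) + 1) =
    ({-3, -2, -1, 0, 1, 2, 3} : Finset ℤ) from by decide]
  rw [Finset.sum_insert (by decide), Finset.sum_insert (by decide),
    Finset.sum_insert (by decide), Finset.sum_insert (by decide),
    Finset.sum_insert (by decide), Finset.sum_insert (by decide),
    Finset.sum_singleton]
  rw [dimzero (isEmptyT (by norm_num)), dimzero (isEmptyT (by norm_num)),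
    dimzero (isEmptyT (by norm_num)), dimH0, dimH1, dimH2,
    dimzero (isEmptyT (by norm_num))]
  norm_num

end StmtAux

end
/-- `C₁ ⊗_A C₁` decomposes either as a direct sum of `C₂` and a shifted copy of
`C₀`, or alternatively as a direct sum of shifted copies of `C₁` together with an
acyclic complex; in particular its total cohomology is `4`-dimensional over `ℚ`. -/
theorem stmt15 :
    ((∃ i j : ℤ,
        Nonempty (PCIso ((Cn 1).tensor (Cn 1)) (stdCn 2 ![(2, 0, 0), (0, i, j)]))) ∨
      (∃ (p : Fin 2 → ℕ × ℤ × ℤ) (E : PC), (∀ k, (p k).1 = 1) ∧ E.IsComplex ∧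
        E.Acyclic ∧ Nonempty (PCIso ((Cn 1).tensor (Cn 1)) ((stdCn 2 p).dsum E)))) ∧
    ((Cn 1).tensor (Cn 1)).totalH = 4 := by
  exact ⟨Or.inr ⟨StmtAux.pvec, StmtAux.Etriv, StmtAux.pv1, StmtAux.EtrivComplex,
    StmtAux.EtrivAcyclic, ⟨StmtAux.theIso⟩⟩, StmtAux.totalH4⟩
end
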